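/- arXiv:2512.14890 — 7 statements merged into one kernel-verified Lean document; each statement's English description precedes it below -/
import Mathlib

section
/- Let t ≥ 2 be an integer, let T be a tree on t+1 vertices of diameter 2 (i.e. a star with t leaves), and let G be a finite simple graph on n vertices with average degree d = 2|E(G)|/n ≥ t. Then the number of injective homomorphisms from T to G is at least n·d(d−1)···(d−t+1), and equality holds if and only if G is d-regular (every vertex of G has degree d). -/
/-!
A tree of diameter two is a star `K_{1,t}`, so an injective homomorphism of it into `G` is a choice
of an image `v` of the centre and an injection of the `t` leaves into the neighbourhood of `v`:
`|Mon(T, G)| = ∑_v (deg v)_t`. The falling factorial `x ↦ (x)_t` is strictly convex on `[t - 1, ∞)`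
for `t ≥ 2`, and at a natural number `m < t - 1` it vanishes, so it lies above its tangent line at
`d > t - 1` at every natural number, strictly except at `d` itself. Summing the tangent line over
the degrees, whose mean is `d`, gives the bound `n (d)_t`, with equality iff every degree is `d`.
-/

/-- Number of injective graph homomorphisms ("labeled copies") from `T` to `G`. -/
noncomputable def monCount {α β : Type} (T : SimpleGraph α) (G : SimpleGraph β) : ℕ :=
  Nat.card {f : α → β // Function.Injective f ∧ ∀ ⦃u v : α⦄, T.Adj u v → G.Adj (f u) (f v)}

/-- Average degree `d = 2|E(G)|/n` of a finite graph. -/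
noncomputable def avgDeg {β : Type} [Fintype β] (G : SimpleGraph β) : ℝ :=
  2 * (Nat.card G.edgeSet) / (Fintype.card β)

/-- Falling factorial `(x)_t = x(x-1)⋯(x-t+1)` of a real number. -/
noncomputable def fallFact (x : ℝ) (t : ℕ) : ℝ := ∏ i ∈ Finset.range t, (x - (i : ℝ))

namespace SimpleGraph

variable {V : Type*} {G : SimpleGraph V}

lemma IsAcyclic.commonNeighbors_subsingleton (hG : G.IsAcyclic) {u v : V} (huv : u ≠ v) :
    (G.commonNeighbors u v).Subsingleton := by
  intro x hx y hy
  rw [G.mem_commonNeighbors] at hx hy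
  have hpx : (Walk.cons hx.1 (Walk.cons hx.2.symm .nil)).IsPath := by
    simp [hx.1.ne, hx.2.ne', huv]
  have hpy : (Walk.cons hy.1 (Walk.cons hy.2.symm .nil)).IsPath := by
    simp [hy.1.ne, hy.2.ne', huv]
  simpa using congrArg (fun p : G.Path u v => p.1.support)
    ((hG.subsingleton_path u v).elim ⟨_, hpx⟩ ⟨_, hpy⟩)

structure IsStarCenter (G : SimpleGraph V) (c : V) : Prop where
  adj_of_ne : ∀ ⦃x⦄, x ≠ c → G.Adj c x
  eq_or_eq_of_adj : ∀ ⦃x y⦄, G.Adj x y → x = c ∨ y = c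

lemma IsTree.exists_isStarCenter (hG : G.IsTree) (hdiam_le : ∀ u v, G.dist u v ≤ 2)
    (hdiam_eq : ∃ u v, G.dist u v = 2) : ∃ c, G.IsStarCenter c := by
  obtain ⟨u, v, huv⟩ := hdiam_eq
  have huv' : G.edist u v = 2 := by
    rw [← (hG.connected u v).coe_dist_eq_edist, huv]; rfl
  obtain ⟨hne, -, c, hc⟩ := edist_eq_two_iff.mp huv'
  have hcu : G.Adj c u := ((G.mem_commonNeighbors).mp hc).1.symm
  have hcv : G.Adj c v := ((G.mem_commonNeighbors).mp hc).2.symm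
  have adj_of_ne : ∀ ⦃x⦄, x ≠ c → G.Adj c x := by
    intro x hxc
    by_contra hcx
    -- then `x` is adjacent to both `u` and `v`, a second common neighbour besides `c`
    have hxc2 : G.dist x c = 2 := by
      have := hG.connected.one_lt_dist_of_ne_of_not_adj hxc (fun h => hcx h.symm)
      have := hdiam_le x c
      omega
    have hx : ∀ w, G.Adj c w → G.Adj x w := fun w hw => by
      have := hG.dist_eq_dist_add_one_of_adj x hw
      have := hdiam_le x w
      exact dist_eq_one_iff_adj.mp (by omega)
    exact hxc (hG.isAcyclic.commonNeighbors_subsingleton hne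
      ((G.mem_commonNeighbors).mpr ⟨(hx u hcu).symm, (hx v hcv).symm⟩) hc)
  refine ⟨c, adj_of_ne, fun x y hxy => ?_⟩
  -- an edge avoiding `c` would close a triangle with `c`
  by_contra! h
  exact hG.dist_ne_of_adj c hxy <| by
    rw [dist_eq_one_iff_adj.mpr (adj_of_ne h.1), dist_eq_one_iff_adj.mpr (adj_of_ne h.2)]

variable {W : Type*} {H : SimpleGraph W} {c : V}

lemma IsStarCenter.injective_and_map_adj_iff (hc : G.IsStarCenter c) (f : V → W) :
    (Function.Injective f ∧ ∀ ⦃u v⦄, G.Adj u v → H.Adj (f u) (f v)) ↔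
      Function.Injective (fun x : {x // x ≠ c} => f x) ∧ ∀ x : {x // x ≠ c}, H.Adj (f c) (f x) := by
  refine ⟨fun ⟨hinj, hadj⟩ => ⟨hinj.comp Subtype.val_injective, fun x => hadj (hc.adj_of_ne x.2)⟩,
    fun ⟨hinj, hadj⟩ => ⟨fun x y hxy => ?_, fun x y hxy => ?_⟩⟩
  · by_cases hx : x = c <;> by_cases hy : y = c
    · rw [hx, hy]
    · exact absurd (hx ▸ hxy) (hadj ⟨y, hy⟩).ne
    · exact absurd (hy ▸ hxy.symm) (hadj ⟨x, hx⟩).ne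
    · exact congrArg Subtype.val (@hinj ⟨x, hx⟩ ⟨y, hy⟩ hxy)
  · rcases hc.eq_or_eq_of_adj hxy with rfl | rfl
    · exact hadj ⟨y, hxy.ne'⟩
    · exact (hadj ⟨x, hxy.ne⟩).symm

def IsStarCenter.embeddingEquiv [DecidableEq V] (hc : G.IsStarCenter c) :
    {f : V → W // Function.Injective f ∧ ∀ ⦃u v⦄, G.Adj u v → H.Adj (f u) (f v)} ≃
      Σ w : W, ({x // x ≠ c} ↪ H.neighborSet w) :=
  ((Equiv.funSplitAt c W).subtypeEquiv fun f => hc.injective_and_map_adj_iff f).trans <|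
    (Equiv.subtypeProdEquivSigmaSubtype fun w (g : {x // x ≠ c} → W) =>
      Function.Injective g ∧ ∀ x, H.Adj w (g x)).trans <|
    Equiv.sigmaCongrRight fun _ =>
      { toFun := fun g => ⟨fun x => ⟨g.1 x, g.2.2 x⟩, fun _ _ h => g.2.1 (congrArg Subtype.val h)⟩
        invFun := fun e =>
          ⟨fun x => e x, fun _ _ h => e.injective (Subtype.ext h), fun x => (e x).2⟩
        left_inv := fun _ => rfl
        right_inv := fun _ => rfl }

end SimpleGraph

lemma SimpleGraph.IsStarCenter.monCount_eq {V W : Type} [Fintype V] [Fintype W] {G : SimpleGraph V}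
    {H : SimpleGraph W} {c : V} (hc : G.IsStarCenter c) :
    monCount G H = ∑ w, (Nat.card (H.neighborSet w)).descFactorial (Fintype.card V - 1) := by
  classical
  rw [monCount, Nat.card_congr hc.embeddingEquiv, Nat.card_sigma]
  refine Finset.sum_congr rfl fun w _ => ?_
  rw [Nat.card_eq_fintype_card, Fintype.card_embedding_eq, Nat.card_eq_fintype_card,
    Fintype.card_subtype_compl, Fintype.card_subtype_eq]

section FallingFactorial

open Set

lemma StrictConvexOn.add_deriv_mul_sub_lt {S : Set ℝ} {f : ℝ → ℝ} {x y : ℝ}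
    (hf : StrictConvexOn ℝ S f) (hx : x ∈ S) (hy : y ∈ S) (hxy : y ≠ x)
    (hfd : DifferentiableAt ℝ f x) : f x + deriv f x * (y - x) < f y := by
  rcases hxy.lt_or_gt with h | h
  · have := hf.slope_lt_deriv hy hx h hfd
    rw [slope_def_field, div_lt_iff₀ (sub_pos.mpr h)] at this
    linarith
  · have := hf.deriv_lt_slope hx hy h hfd
    rw [slope_def_field, lt_div_iff₀ (sub_pos.mpr h)] at this
    linarith

lemma sub_natCast_pos_of_mem_range {n j : ℕ} {a : ℝ} (ha : n - 1 < a) (hj : j ∈ Finset.range n) :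
    0 < a - j := by
  have : (j : ℝ) + 1 ≤ n := by exact_mod_cast Finset.mem_range.mp hj
  linarith

lemma strictMonoOn_deriv_descPochhammer_eval {n : ℕ} (hn : 2 ≤ n) :
    StrictMonoOn (deriv (descPochhammer ℝ n).eval) (Ioi (n - 1 : ℝ)) := by
  intro a ha b hb hab
  simp_rw [deriv_descPochhammer_eval_eq_sum_prod_range_erase]
  refine Finset.sum_lt_sum_of_nonempty (Finset.nonempty_range_iff.mpr (by omega)) fun i hi => ?_
  refine Finset.prod_lt_prod_of_nonempty
    (fun j hj => sub_natCast_pos_of_mem_range ha (Finset.mem_of_mem_erase hj))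
    (fun j _ => by linarith) ?_
  rw [← Finset.card_pos, Finset.card_erase_of_mem hi, Finset.card_range]
  omega

lemma strictConvexOn_descPochhammer_eval {n : ℕ} (hn : 2 ≤ n) :
    StrictConvexOn ℝ (Ici (n - 1 : ℝ)) (descPochhammer ℝ n).eval :=
  StrictMonoOn.strictConvexOn_of_deriv (convex_Ici _) continuous_descPochhammer_eval.continuousOn
    (by simpa using strictMonoOn_deriv_descPochhammer_eval hn)

lemma descFactorial_eq_descPochhammer_eval_max (m n : ℕ) :
    (m.descFactorial n : ℝ) = (descPochhammer ℝ n).eval (max (m : ℝ) (n - 1)) := by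
  rcases le_or_gt (n - 1 : ℝ) m with h | h
  · rw [max_eq_left h, descPochhammer_eval_eq_descFactorial]
  · have hmn : m < n := by exact_mod_cast h.trans (sub_lt_self _ one_pos)
    have hcast : (n - 1 : ℝ) = ((n - 1 : ℕ) : ℝ) := by rw [Nat.cast_sub (by omega), Nat.cast_one]
    rw [max_eq_right h.le, Nat.descFactorial_eq_zero_iff_lt.mpr hmn, Nat.cast_zero, hcast,
      descPochhammer_eval_coe_nat_of_lt (by omega)]

lemma descPochhammer_eval_add_deriv_mul_sub_lt_descFactorial {n m : ℕ} {d : ℝ} (hn : 2 ≤ n)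
    (hd : n - 1 < d) (hm : (m : ℝ) ≠ d) :
    (descPochhammer ℝ n).eval d + deriv (descPochhammer ℝ n).eval d * (m - d)
      < m.descFactorial n := by
  have hslope : 0 ≤ deriv (descPochhammer ℝ n).eval d := by
    rw [deriv_descPochhammer_eval_eq_sum_prod_range_erase]
    exact Finset.sum_nonneg fun i _ => Finset.prod_nonneg fun j hj =>
      (sub_natCast_pos_of_mem_range hd (Finset.mem_of_mem_erase hj)).le
  -- `m < n - 1` lies outside the domain of convexity: replace it by `n - 1`, where the falling
  -- factorial still vanishes and the tangent line is no lower, its slope being nonnegative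
  have hy : max (m : ℝ) (n - 1) ≠ d := by
    rcases max_choice (m : ℝ) (n - 1) with h | h <;> rw [h] <;> [exact hm; exact hd.ne]
  calc (descPochhammer ℝ n).eval d + deriv (descPochhammer ℝ n).eval d * (m - d)
      ≤ (descPochhammer ℝ n).eval d
          + deriv (descPochhammer ℝ n).eval d * (max (m : ℝ) (n - 1) - d) := by
        gcongr; exact le_max_left _ _
    _ < (descPochhammer ℝ n).eval (max (m : ℝ) (n - 1)) :=
        (strictConvexOn_descPochhammer_eval hn).add_deriv_mul_sub_lt hd.le
          (mem_Ici.mpr (le_max_right _ _)) hy differentiable_descPochhammer_eval.differentiableAt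
    _ = m.descFactorial n := (descFactorial_eq_descPochhammer_eval_max m n).symm

lemma descPochhammer_eval_add_deriv_mul_sub_le_descFactorial {n : ℕ} {d : ℝ} (hn : 2 ≤ n)
    (hd : n - 1 < d) (m : ℕ) :
    (descPochhammer ℝ n).eval d + deriv (descPochhammer ℝ n).eval d * (m - d)
      ≤ m.descFactorial n := by
  by_cases hm : (m : ℝ) = d
  · rw [← hm, sub_self, mul_zero, add_zero, descPochhammer_eval_eq_descFactorial]
  · exact (descPochhammer_eval_add_deriv_mul_sub_lt_descFactorial hn hd hm).le

lemma Finset.sum_add_mul_sub_eq_card_mul {ι : Type*} (s : Finset ι) (x : ι → ℝ) (a b d : ℝ)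
    (hx : ∑ i ∈ s, x i = s.card * d) : ∑ i ∈ s, (a + b * (x i - d)) = s.card * a := by
  simp only [Finset.sum_add_distrib, ← Finset.mul_sum, Finset.sum_sub_distrib, hx,
    Finset.sum_const, nsmul_eq_mul]
  ring

variable {ι : Type*} {s : Finset ι} {m : ι → ℕ} {n : ℕ} {d : ℝ}

lemma card_mul_descPochhammer_eval_le_sum_descFactorial (hn : 2 ≤ n) (hd : n - 1 < d)
    (hm : ∑ i ∈ s, (m i : ℝ) = s.card * d) :
    s.card * (descPochhammer ℝ n).eval d ≤ ∑ i ∈ s, ((m i).descFactorial n : ℝ) := by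
  rw [← s.sum_add_mul_sub_eq_card_mul _ _ (deriv (descPochhammer ℝ n).eval d) d hm]
  exact Finset.sum_le_sum fun i _ =>
    descPochhammer_eval_add_deriv_mul_sub_le_descFactorial hn hd (m i)

lemma sum_descFactorial_eq_card_mul_descPochhammer_eval_iff (hn : 2 ≤ n) (hd : n - 1 < d)
    (hm : ∑ i ∈ s, (m i : ℝ) = s.card * d) :
    ∑ i ∈ s, ((m i).descFactorial n : ℝ) = s.card * (descPochhammer ℝ n).eval d ↔
      ∀ i ∈ s, (m i : ℝ) = d := by
  refine ⟨fun h => ?_, fun h => ?_⟩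
  · by_contra! ⟨i, hi, hne⟩
    have := Finset.sum_lt_sum
      (fun j _ => descPochhammer_eval_add_deriv_mul_sub_le_descFactorial hn hd (m j))
      ⟨i, hi, descPochhammer_eval_add_deriv_mul_sub_lt_descFactorial hn hd hne⟩
    rw [s.sum_add_mul_sub_eq_card_mul _ _ _ d hm] at this
    exact this.ne' h
  · rw [Finset.sum_congr rfl fun i hi => by rw [← descPochhammer_eval_eq_descFactorial, h i hi],
      Finset.sum_const, nsmul_eq_mul]

end FallingFactorial

lemma fallFact_eq_descPochhammer_eval (x : ℝ) (t : ℕ) :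
    fallFact x t = (descPochhammer ℝ t).eval x :=
  (descPochhammer_eval_eq_prod_range t x).symm

lemma SimpleGraph.sum_natCard_neighborSet_eq_card_mul_avgDeg {V : Type} [Fintype V]
    (G : SimpleGraph V) : ∑ v, (Nat.card (G.neighborSet v) : ℝ) = Fintype.card V * avgDeg G := by
  classical
  rcases (Fintype.card V).eq_zero_or_pos with hV | hV
  · simp [Fintype.card_eq_zero_iff.mp hV]
  have hdeg : ∑ v, Nat.card (G.neighborSet v) = 2 * Nat.card G.edgeSet := by
    simp only [Nat.card_eq_fintype_card, card_neighborSet_eq_degree,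
      sum_degrees_eq_twice_card_edges, edgeFinset_card]
  rw [avgDeg, mul_div_cancel₀ _ (by positivity)]
  exact_mod_cast hdeg

/-- Diameter-2 case: if `T` is a tree on `t+1` vertices of diameter 2 (a star with `t` leaves)
and `G` has average degree `d ≥ t`, then `|Mon(T,G)| ≥ n·d(d-1)⋯(d-t+1)`, with equality iff
`G` is `d`-regular. -/
theorem star_count_lower_bound_and_equality (t : ℕ) (ht : 2 ≤ t)
    (α β : Type) [Fintype α] [Fintype β]
    (T : SimpleGraph α) (G : SimpleGraph β)
    (hT : T.IsTree) (hcard : Fintype.card α = t + 1)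
    (hdiam_le : ∀ u v : α, T.dist u v ≤ 2) (hdiam_eq : ∃ u v : α, T.dist u v = 2)
    (hd : (t : ℝ) ≤ avgDeg G) :
    (Fintype.card β : ℝ) * fallFact (avgDeg G) t ≤ (monCount T G : ℝ) ∧
    ((monCount T G : ℝ) = (Fintype.card β : ℝ) * fallFact (avgDeg G) t ↔
      ∀ v : β, (Nat.card (G.neighborSet v) : ℝ) = avgDeg G) := by
  obtain ⟨c, hc⟩ := hT.exists_isStarCenter hdiam_le hdiam_eq
  have hmon : (monCount T G : ℝ) = ∑ v, ((Nat.card (G.neighborSet v)).descFactorial t : ℝ) := by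
    rw [hc.monCount_eq, hcard, Nat.add_sub_cancel, Nat.cast_sum]
  have hdeg : ∑ v ∈ Finset.univ, (Nat.card (G.neighborSet v) : ℝ)
      = (Finset.univ : Finset β).card * avgDeg G := by
    rw [Finset.card_univ, G.sum_natCard_neighborSet_eq_card_mul_avgDeg]
  have hd' : (t : ℝ) - 1 < avgDeg G := by linarith
  rw [hmon, fallFact_eq_descPochhammer_eval, ← Finset.card_univ]
  exact ⟨card_mul_descPochhammer_eval_le_sum_descFactorial ht hd' hdeg,
    (sum_descFactorial_eq_card_mul_descPochhammer_eval_iff ht hd' hdeg).trans (by simp)⟩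
end

section
/- For every positive integer t there exists d0(t) such that the following holds for all real d ≥ d0(t), every integer i with 1 ≤ i ≤ t−1, and all real numbers x, y ≥ d/4. Setting c_u = x/d and c_v = y/d, define Σ¹ = (1/8)·( (1/c_v)[c_v·log((c_v·d − i)/(d − i)) − (c_v − 1)·d/(d − i)] + (1/c_u)[c_u·log((c_u·d − i)/(d − i)) − (c_u − 1)·d/(d − i)] ), Σ² = (1/(8t))·min(1/x, 1/y), and Σ³ = (8t²/d)·( |log(x/y)| + 8t/d ). Then Σ¹ + Σ² − Σ³ ≥ 0. -/
/-!
Put `v = d / z` and `ε = i / (d - i)` for a vertex of degree `z`. Since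
`(z - i) / (d - i) = v⁻¹ (1 + q)` with `q = (1 - v) ε`, its summand of `Σ¹` is
`(v - 1 - log v) + (log (1 + q) - q)`. Applying `log s ≤ s - 1` to `s = √v` bounds the first
part below by `(√v - 1)²`, while the second is `≥ -2q²`, negligible as `ε = O(t / d)`. For
`v ≥ 1/4` also `|log v| ≤ 4 |√v - 1|`, so by AM-GM the vertex's share of `Σ³` exceeds `Σ¹/8`
by at most `O(t⁴ / d²)`, which half of `Σ²` absorbs once `d ≥ 2¹⁸ t⁵`. When `z ≥ 2d` the
`Σ¹`-summand is bounded below by a constant (by `log (z / d) - 1` if `z ≥ 4d`), which also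
covers the other vertex's deficit, as `Σ²` may then be tiny.
-/

open Real

lemma sq_sqrt_sub_one_le_sub_one_sub_log {v : ℝ} (hv : 0 < v) :
    (√v - 1) ^ 2 ≤ v - 1 - log v := by
  have hlog : log v ≤ 2 * (√v - 1) := by
    have := log_le_sub_one_of_pos (sqrt_pos.2 hv)
    rw [log_sqrt hv.le] at this
    linarith
  nlinarith [sq_sqrt hv.le]

lemma neg_two_mul_sq_le_log_one_add_sub_self {q : ℝ} (hq : -1 / 2 ≤ q) :
    -(2 * q ^ 2) ≤ log (1 + q) - q := by
  have hq0 : 0 < 1 + q := by linarith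
  have hlog := one_sub_inv_le_log_of_pos hq0
  have hq2 : q ^ 2 / (1 + q) ≤ 2 * q ^ 2 := by
    rw [div_le_iff₀ hq0]; nlinarith [sq_nonneg q]
  have : 1 - (1 + q)⁻¹ = q - q ^ 2 / (1 + q) := by
    field_simp; ring
  linarith

lemma abs_log_le_two_mul_abs_sub_one {s : ℝ} (hs : 1 / 2 ≤ s) : |log s| ≤ 2 * |s - 1| := by
  have hs0 : 0 < s := by linarith
  have hlower : -(2 * |s - 1|) ≤ 1 - s⁻¹ := by
    have : 1 - s⁻¹ = (s - 1) / s := by field_simp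
    rw [this, neg_le, ← neg_div, div_le_iff₀ hs0]
    nlinarith [neg_abs_le (s - 1), abs_nonneg (s - 1)]
  rw [abs_le]
  constructor
  · linarith [one_sub_inv_le_log_of_pos hs0]
  · linarith [log_le_sub_one_of_pos hs0, le_abs_self (s - 1), abs_nonneg (s - 1)]

lemma abs_log_le_four_mul_abs_sqrt_sub_one {v : ℝ} (hv : 1 / 4 ≤ v) :
    |log v| ≤ 4 * |√v - 1| := by
  have hs : 1 / 2 ≤ √v := (le_sqrt (by norm_num) (by linarith)).2 (by linarith)
  have hlog : log v = 2 * log √v := by rw [log_sqrt (by linarith)]; ring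
  rw [hlog, abs_mul, abs_two]
  linarith [abs_log_le_two_mul_abs_sub_one hs]

noncomputable def sigmaOneProfile (v ε : ℝ) : ℝ :=
  (v - 1 - log v) + (log (1 + (1 - v) * ε) - (1 - v) * ε)

lemma half_sq_sqrt_sub_one_le_sigmaOneProfile {v ε : ℝ} (hv : 1 / 4 ≤ v) (hv' : v ≤ 4)
    (hε : 0 ≤ ε) (hε' : ε ≤ 1 / 6) :
    (√v - 1) ^ 2 / 2 ≤ sigmaOneProfile v ε := by
  rw [sigmaOneProfile]
  have hs : √v ≤ 2 := (sqrt_le_left (by norm_num)).2 (by linarith)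
  have hsq : (1 - v) ^ 2 = (√v - 1) ^ 2 * (√v + 1) ^ 2 := by
    rw [← mul_pow, ← neg_sub v, neg_sq]
    congr 1
    linear_combination -sq_sqrt (show 0 ≤ v by linarith)
  have hq : ((1 - v) * ε) ^ 2 ≤ (√v - 1) ^ 2 / 4 := by
    rw [mul_pow, hsq]
    have : (√v + 1) ^ 2 * ε ^ 2 ≤ 1 / 4 := by
      nlinarith [sqrt_nonneg v, mul_le_mul hε' hε' hε (by norm_num : (0:ℝ) ≤ 1 / 6)]
    nlinarith [sq_nonneg (√v - 1)]
  have hR := neg_two_mul_sq_le_log_one_add_sub_self (q := (1 - v) * ε) (by nlinarith)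
  linarith [sq_sqrt_sub_one_le_sub_one_sub_log (show 0 < v by linarith)]

lemma neg_log_sub_le_sigmaOneProfile {v ε : ℝ} (hv : 0 < v) (hv' : v ≤ 1) (hε : 0 ≤ ε) :
    -log v - 1 - 2 * ε ^ 2 ≤ sigmaOneProfile v ε := by
  rw [sigmaOneProfile]
  have hq : 0 ≤ (1 - v) * ε := mul_nonneg (by linarith) hε
  have hq' : (1 - v) * ε ≤ ε := by nlinarith
  have hR := neg_two_mul_sq_le_log_one_add_sub_self (q := (1 - v) * ε) (by linarith)
  nlinarith

noncomputable def sigmaOneTerm (d i z : ℝ) : ℝ :=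
  (1 / (z / d)) * ((z / d) * log ((z / d * d - i) / (d - i)) - (z / d - 1) * d / (d - i))

lemma sigmaOneTerm_eq {d i z : ℝ} (hi : 0 ≤ i) (hid : i < d) (hiz : i < z) :
    sigmaOneTerm d i z = sigmaOneProfile (d / z) (i / (d - i)) := by
  have hd : 0 < d := by linarith
  have hz : 0 < z := by linarith
  have hdi : 0 < d - i := by linarith
  have hsplit : (z / d * d - i) / (d - i) = (d / z)⁻¹ * (1 + (1 - d / z) * (i / (d - i))) := by
    field_simp; ring
  have hq : 1 + (1 - d / z) * (i / (d - i)) ≠ 0 := by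
    rintro hq
    have : 0 < (z / d * d - i) / (d - i) := by
      rw [div_mul_cancel₀ z hd.ne']; exact div_pos (by linarith) hdi
    rw [hsplit, hq, mul_zero] at this
    exact this.false
  rw [sigmaOneTerm, sigmaOneProfile, hsplit, log_mul (by positivity) hq, log_inv]
  field_simp
  ring

noncomputable def sigmaThreeShare (t d z : ℝ) : ℝ :=
  8 * t ^ 2 / d * |log (z / d)| + 32 * t ^ 3 / d ^ 2

lemma sigmaThree_le_sigmaThreeShare_add {t d x y : ℝ} (hd : 0 < d) (hx : 0 < x) (hy : 0 < y) :
    8 * t ^ 2 / d * (|log (x / y)| + 8 * t / d)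
      ≤ sigmaThreeShare t d x + sigmaThreeShare t d y := by
  have hlog : log (x / y) = log (x / d) - log (y / d) := by
    rw [log_div hx.ne' hy.ne', log_div hx.ne' hd.ne', log_div hy.ne' hd.ne']
    ring
  have habs : |log (x / y)| ≤ |log (x / d)| + |log (y / d)| := hlog ▸ abs_sub _ _
  have hcoef : 0 ≤ 8 * t ^ 2 / d := by positivity
  calc 8 * t ^ 2 / d * (|log (x / y)| + 8 * t / d)
      ≤ 8 * t ^ 2 / d * (|log (x / d)| + |log (y / d)| + 8 * t / d) := by gcongr
    _ = _ := by unfold sigmaThreeShare; ring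

section LargeDegree

variable {t d i z : ℝ}

lemma pos_of_large (ht : 1 ≤ t) (hd : 2 ^ 18 * t ^ 5 ≤ d) : 0 < d := by
  nlinarith [one_le_pow₀ (n := 5) ht]

lemma div_sub_le_two_mul_div (ht : 0 < t) (hit : i ≤ t) (htd : 2 * t ≤ d) :
    i / (d - i) ≤ 2 * t / d := by
  have hd : 0 < d - i := by linarith
  rw [div_le_div_iff₀ hd (by linarith)]
  nlinarith

lemma half_sq_le_sigmaOneTerm (ht : 1 ≤ t) (hd : 2 ^ 18 * t ^ 5 ≤ d) (hi : 0 ≤ i) (hit : i ≤ t)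
    (hz : d / 4 ≤ z) (hz' : z ≤ 4 * d) :
    |√(d / z) - 1| ^ 2 / 2 ≤ sigmaOneTerm d i z := by
  have ht5 : t ≤ t ^ 5 := le_self_pow₀ ht (by norm_num)
  have hd0 := pos_of_large ht hd
  have hε : i / (d - i) ≤ 2 * t / d := div_sub_le_two_mul_div (by linarith) hit (by nlinarith)
  rw [sigmaOneTerm_eq hi (by nlinarith) (by nlinarith), sq_abs]
  refine half_sq_sqrt_sub_one_le_sigmaOneProfile ?_ ?_ (div_nonneg hi (by nlinarith))
    (hε.trans ?_)
  · rw [le_div_iff₀ (by linarith)]; linarith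
  · rw [div_le_iff₀ (by linarith)]; linarith
  · rw [div_le_iff₀ hd0]; nlinarith

lemma log_sub_le_sigmaOneTerm (ht : 1 ≤ t) (hd : 2 ^ 18 * t ^ 5 ≤ d) (hi : 0 ≤ i) (hit : i ≤ t)
    (hz : 4 * d ≤ z) :
    log (z / d) - 1 - 8 * (t / d) ^ 2 ≤ sigmaOneTerm d i z := by
  have ht5 : t ≤ t ^ 5 := le_self_pow₀ ht (by norm_num)
  have hd0 := pos_of_large ht hd
  have hε : i / (d - i) ≤ 2 * t / d := div_sub_le_two_mul_div (by linarith) hit (by nlinarith)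
  have hε0 : 0 ≤ i / (d - i) := div_nonneg hi (by nlinarith)
  rw [sigmaOneTerm_eq hi (by nlinarith) (by nlinarith)]
  have hv : d / z ≤ 1 := by rw [div_le_one (by linarith)]; linarith
  have hG := neg_log_sub_le_sigmaOneProfile (div_pos hd0 (by linarith)) hv hε0
  have hsq : (i / (d - i)) ^ 2 ≤ 4 * (t / d) ^ 2 :=
    (pow_le_pow_left₀ hε0 hε 2).trans_eq (by ring)
  rw [← log_inv, inv_div] at hG
  linarith

lemma abs_log_div_le (hz : 0 < z) (hz' : z ≤ 4 * d) : |log (z / d)| ≤ 4 * |√(d / z) - 1| := by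
  rw [← abs_neg, ← log_inv, inv_div]
  exact abs_log_le_four_mul_abs_sqrt_sub_one (by rw [le_div_iff₀ hz]; linarith)

lemma eight_mul_sq_div_le_of_large (ht : 1 ≤ t) (hd : 2 ^ 18 * t ^ 5 ≤ d) :
    8 * t ^ 2 / d ≤ 1 / 4096 := by
  have : t ^ 2 ≤ t ^ 5 := pow_le_pow_right₀ ht (by norm_num)
  rw [div_le_div_iff₀ (pos_of_large ht hd) (by norm_num)]
  nlinarith

lemma cube_div_sq_add_inv_le_of_large (ht : 1 ≤ t) (hd : 2 ^ 18 * t ^ 5 ≤ d) :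
    32 * t ^ 3 / d ^ 2 + 1 / (32 * t * d) ≤ 1 / 2048 := by
  have h3 : t ^ 3 ≤ t ^ 5 := pow_le_pow_right₀ ht (by norm_num)
  have h1 : 1 ≤ t ^ 5 := one_le_pow₀ ht
  have hd1 : 1 ≤ d := by nlinarith
  have ha : 32 * t ^ 3 / d ^ 2 ≤ 1 / 4096 := by
    rw [div_le_div_iff₀ (by positivity) (by norm_num)]; nlinarith
  have hb : 1 / (32 * t * d) ≤ 1 / 4096 := by
    rw [div_le_div_iff₀ (by positivity) (by norm_num)]; nlinarith
  linarith

lemma pow_four_div_add_le_of_large (ht : 1 ≤ t) (hd : 2 ^ 18 * t ^ 5 ≤ d) :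
    4096 * t ^ 4 / d ^ 2 + 32 * t ^ 3 / d ^ 2 ≤ 1 / (32 * t * d) := by
  have h4 : t ^ 4 ≤ t ^ 5 := pow_le_pow_right₀ ht (by norm_num)
  have h3 : t ^ 3 ≤ t ^ 5 := pow_le_pow_right₀ ht (by norm_num)
  have hd0 := pos_of_large ht hd
  rw [← add_div, div_le_div_iff₀ (by positivity) (by positivity)]
  have : 32 * t * (4096 * t ^ 4 + 32 * t ^ 3) ≤ d := by nlinarith
  nlinarith

lemma sigmaThreeShare_add_le_of_le_four_mul (ht : 1 ≤ t) (hd : 2 ^ 18 * t ^ 5 ≤ d) (hi : 0 ≤ i)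
    (hit : i ≤ t) (hz : 2 * d ≤ z) (hz' : z ≤ 4 * d) :
    sigmaThreeShare t d z + 1 / (32 * t * d) ≤ (1 / 8) * sigmaOneTerm d i z := by
  have hd0 := pos_of_large ht hd
  set r := |√(d / z) - 1|
  have hG := half_sq_le_sigmaOneTerm ht hd hi hit (by linarith) hz'
  have hℓ := abs_log_div_le (by linarith) hz'
  have hr : 1 / 4 ≤ r := by
    have : √(d / z) ≤ 3 / 4 := by
      rw [sqrt_le_left (by norm_num), div_le_iff₀ (by linarith)]; linarith
    exact le_abs.2 (Or.inr (by linarith))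
  have hc := eight_mul_sq_div_le_of_large ht hd
  have hk := cube_div_sq_add_inv_le_of_large ht hd
  have : 8 * t ^ 2 / d * |log (z / d)| ≤ 1 / 4096 * (4 * r) :=
    mul_le_mul hc hℓ (abs_nonneg _) (by norm_num)
  unfold sigmaThreeShare
  nlinarith

lemma sigmaThreeShare_add_le_of_four_mul_le (ht : 1 ≤ t) (hd : 2 ^ 18 * t ^ 5 ≤ d) (hi : 0 ≤ i)
    (hit : i ≤ t) (hz : 4 * d ≤ z) :
    sigmaThreeShare t d z + 1 / (32 * t * d) ≤ (1 / 8) * sigmaOneTerm d i z := by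
  have hd0 := pos_of_large ht hd
  have hG := log_sub_le_sigmaOneTerm ht hd hi hit hz
  have hℓ : 2 * log 2 ≤ log (z / d) := by
    rw [← log_rpow two_pos]
    exact log_le_log (by norm_num) (by rw [le_div_iff₀ hd0]; norm_num; linarith)
  have hc := eight_mul_sq_div_le_of_large ht hd
  have hk := cube_div_sq_add_inv_le_of_large ht hd
  have htd : (t / d) ^ 2 ≤ 1 / 4096 := by
    have : t / d ≤ 1 / 64 := by
      rw [div_le_div_iff₀ hd0 (by norm_num)]; nlinarith [le_self_pow₀ ht (by norm_num : 5 ≠ 0)]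
    nlinarith [div_pos (by linarith : (0:ℝ) < t) hd0]
  have h2 := log_two_gt_d9
  rw [sigmaThreeShare, abs_of_nonneg (by linarith)]
  nlinarith

lemma sigmaThreeShare_add_le (ht : 1 ≤ t) (hd : 2 ^ 18 * t ^ 5 ≤ d) (hi : 0 ≤ i) (hit : i ≤ t)
    (hz : 2 * d ≤ z) :
    sigmaThreeShare t d z + 1 / (32 * t * d) ≤ (1 / 8) * sigmaOneTerm d i z := by
  rcases le_total z (4 * d) with hz' | hz'
  · exact sigmaThreeShare_add_le_of_le_four_mul ht hd hi hit hz hz'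
  · exact sigmaThreeShare_add_le_of_four_mul_le ht hd hi hit hz'

lemma sigmaThreeShare_le (ht : 1 ≤ t) (hd : 2 ^ 18 * t ^ 5 ≤ d) (hi : 0 ≤ i) (hit : i ≤ t)
    (hz : d / 4 ≤ z) :
    sigmaThreeShare t d z ≤ (1 / 8) * sigmaOneTerm d i z + 1 / (32 * t * d) := by
  have hd0 := pos_of_large ht hd
  rcases le_total (2 * d) z with hz' | hz'
  · have := sigmaThreeShare_add_le ht hd hi hit hz'
    have : 0 ≤ 1 / (32 * t * d) := by positivity
    linarith
  set r := |√(d / z) - 1|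
  have hG := half_sq_le_sigmaOneTerm ht hd hi hit hz (by linarith)
  have hℓ := abs_log_div_le (by linarith) (by linarith : z ≤ 4 * d)
  have hamgm : 8 * t ^ 2 / d * |log (z / d)| ≤ r ^ 2 / 16 + 4096 * t ^ 4 / d ^ 2 :=
    calc 8 * t ^ 2 / d * |log (z / d)| ≤ 8 * t ^ 2 / d * (4 * r) := by gcongr
      _ = r ^ 2 / 16 + 4096 * t ^ 4 / d ^ 2 - (r / 4 - 64 * t ^ 2 / d) ^ 2 := by ring
      _ ≤ r ^ 2 / 16 + 4096 * t ^ 4 / d ^ 2 := sub_le_self _ (sq_nonneg _)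
  unfold sigmaThreeShare
  linarith [pow_four_div_add_le_of_large ht hd]

end LargeDegree

/-- Claim 4.1: for `d` large enough in terms of `t`, for all `1 ≤ i ≤ t-1` and degrees
`x, y ≥ d/4` (with `c_u = x/d`, `c_v = y/d`), one has `Σ¹ + Σ² - Σ³ ≥ 0`, where
`Σ¹`, `Σ²`, `Σ³` are the error terms from the entropy computation. -/
theorem error_terms_nonneg (t : ℕ) (ht : 1 ≤ t) :
    ∃ d0 : ℝ, ∀ d : ℝ, d0 ≤ d → ∀ i : ℕ, 1 ≤ i → i ≤ t - 1 →
      ∀ x y : ℝ, d / 4 ≤ x → d / 4 ≤ y →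
      0 ≤ (1/8) * ((1/(y/d)) * ((y/d) * Real.log ((y/d * d - i)/(d - i))
              - (y/d - 1) * d/(d - i))
            + (1/(x/d)) * ((x/d) * Real.log ((x/d * d - i)/(d - i))
              - (x/d - 1) * d/(d - i)))
          + (1/(8*t)) * min (1/x) (1/y)
          - (8*t^2/d) * (|Real.log (x/y)| + 8*t/d) := by
  refine ⟨2 ^ 18 * (t : ℝ) ^ 5, fun d hd i _ hit x y hx hy => ?_⟩
  have ht' : (1 : ℝ) ≤ t := by exact_mod_cast ht
  have hit' : (i : ℝ) ≤ t := by exact_mod_cast hit.trans (Nat.sub_le t 1)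
  have hi : (0 : ℝ) ≤ i := i.cast_nonneg
  have hd0 := pos_of_large ht' hd
  have hx0 : 0 < x := by linarith
  have hy0 : 0 < y := by linarith
  have hsigmaThree := sigmaThree_le_sigmaThreeShare_add (t := (t : ℝ)) hd0 hx0 hy0
  have hshareX := sigmaThreeShare_le ht' hd hi hit' hx
  have hshareY := sigmaThreeShare_le ht' hd hi hit' hy
  have hsigmaTwo : 0 ≤ 1 / (8 * (t : ℝ)) * min (1 / x) (1 / y) := by positivity
  change 0 ≤ (1 / 8) * (sigmaOneTerm d i y + sigmaOneTerm d i x) + _ - _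
  rcases le_total (2 * d) x with hx' | hx'
  · linarith [sigmaThreeShare_add_le ht' hd hi hit' hx']
  rcases le_total (2 * d) y with hy' | hy'
  · linarith [sigmaThreeShare_add_le ht' hd hi hit' hy']
  have hmin : 1 / (2 * d) ≤ min (1 / x) (1 / y) :=
    le_min (one_div_le_one_div_of_le hx0 hx') (one_div_le_one_div_of_le hy0 hy')
  have : 2 * (1 / (32 * (t : ℝ) * d)) ≤ 1 / (8 * t) * min (1 / x) (1 / y) :=
    calc 2 * (1 / (32 * (t : ℝ) * d)) = 1 / (8 * t) * (1 / (2 * d)) := by ring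
      _ ≤ _ := by gcongr
  linarith
end

section
/- For every nonnegative integer i there exists d0(i) such that for all real d ≥ d0(i) the function f(c) = (1/c)·[ c·log((c·d − i)/(d − i)) − (c − 1)·d/(d − i) ], defined for real c with c·d > i, satisfies: f(1) = 0; f is strictly decreasing on the interval [i/(d − i), 1]; f is strictly increasing on the interval [1, ∞); and consequently f(c) ≥ 0 for all c in [i/(d − i), ∞). -/
/-!
On the domain `cd > i` the derivative `f'(c) = d (c-1) (c(d-i) - i) / ((cd-i)(d-i) c²)` has a
positive denominator, and its factor `c(d-i) - i` changes sign exactly at `a = i/(d-i)`.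
So `f' < 0` on `(a, 1)` and, once `a ≤ 1` (that is `d ≥ 2i`), `f' > 0` on `(1, ∞)`;
with `f(1) = log 1 = 0` this gives both the monotonicity and the nonnegativity.
-/

/-- The function `f(c) = (1/c)·[c·log((cd-i)/(d-i)) - (c-1)·d/(d-i)]` from Lemma 5.1. -/
noncomputable def fErr (i : ℕ) (d : ℝ) (c : ℝ) : ℝ :=
  (1/c) * (c * Real.log ((c * d - i)/(d - i)) - (c - 1) * d/(d - i))

open Set

lemma fErr_one (i : ℕ) (d : ℝ) : fErr i d 1 = 0 := by
  by_cases h : d - i = 0 <;> simp [fErr, h]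

section

variable {i : ℕ} {d : ℝ}

lemma hasDerivAt_fErr (hd : (i : ℝ) < d) {c : ℝ} (hcd : (i : ℝ) < c * d) :
    HasDerivAt (fErr i d)
      (d * (c - 1) * (c * (d - i) - i) / ((c * d - i) * (d - i) * c ^ 2)) c := by
  have hc : c ≠ 0 := by rintro rfl; linarith [Nat.cast_nonneg (α := ℝ) i]
  have hdi : d - i ≠ 0 := by linarith
  have hcdi : c * d - i ≠ 0 := by linarith
  have hlin : HasDerivAt (fun x : ℝ => (x * d - i) / (d - i)) (d / (d - i)) c := by
    simpa using (((hasDerivAt_id c).mul_const d).sub_const (i : ℝ)).div_const (d - i)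
  have hlog := hlin.log (div_ne_zero hcdi hdi)
  have haff : HasDerivAt (fun x : ℝ => (x - 1) * d / (d - i)) (d / (d - i)) c := by
    simpa using (((hasDerivAt_id c).sub_const (1 : ℝ)).mul_const d).div_const (d - i)
  have hinv : HasDerivAt (fun x : ℝ => 1 / x) (-(1 / c ^ 2)) c := by
    simpa [one_div] using hasDerivAt_inv hc
  refine HasDerivAt.congr_deriv (f := fErr i d)
    (hinv.mul (((hasDerivAt_id' c).mul hlog).sub haff)) ?_
  field_simp
  ring

lemma continuousOn_fErr (hd : (i : ℝ) < d) : ContinuousOn (fErr i d) {c | (i : ℝ) < c * d} :=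
  fun _ hc => (hasDerivAt_fErr hd hc).continuousAt.continuousWithinAt

lemma strictAntiOn_fErr (hd : (i : ℝ) < d) :
    StrictAntiOn (fErr i d) (Icc ((i : ℝ) / (d - i)) 1 ∩ {c | (i : ℝ) < c * d}) := by
  have hdi : 0 < d - i := by linarith
  have hU : IsOpen {c : ℝ | (i : ℝ) < c * d} := isOpen_lt continuous_const (by fun_prop)
  have hUconv : Convex ℝ {c : ℝ | (i : ℝ) < c * d} :=
    convex_halfSpace_gt (LinearMap.mulRight ℝ d).isLinear _
  refine strictAntiOn_of_hasDerivWithinAt_neg ((convex_Icc _ _).inter hUconv)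
    ((continuousOn_fErr hd).mono inter_subset_right)
    (fun c hc => (hasDerivAt_fErr hd (interior_subset hc).2).hasDerivWithinAt) ?_
  intro c hc
  rw [interior_inter, interior_Icc, hU.interior_eq] at hc
  obtain ⟨⟨hac, hc1⟩, hcd : (i : ℝ) < c * d⟩ := hc
  have hc0 : 0 < c := lt_of_le_of_lt (by positivity) hac
  have hroot : 0 < c * (d - i) - i := by rw [div_lt_iff₀ hdi] at hac; linarith
  have hcdi : 0 < c * d - i := by linarith
  refine div_neg_of_neg_of_pos ?_ (by positivity)
  exact mul_neg_of_neg_of_pos (mul_neg_of_pos_of_neg (by linarith) (by linarith)) hroot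

lemma strictMonoOn_fErr (hd : (i : ℝ) < d) (h2i : 2 * (i : ℝ) ≤ d) :
    StrictMonoOn (fErr i d) (Ici 1) := by
  have hi : (0 : ℝ) ≤ i := Nat.cast_nonneg i
  have hdom : Ici 1 ⊆ {c : ℝ | (i : ℝ) < c * d} := fun c (hc : 1 ≤ c) => by
    show (i : ℝ) < c * d; nlinarith
  refine strictMonoOn_of_hasDerivWithinAt_pos (convex_Ici 1) ((continuousOn_fErr hd).mono hdom)
    (fun c hc => (hasDerivAt_fErr hd (hdom (interior_subset hc))).hasDerivWithinAt) ?_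
  intro c hc
  rw [interior_Ici] at hc
  have hc1 : 1 < c := hc
  have hroot : 0 < c * (d - i) - i := by nlinarith
  have hcdi : 0 < c * d - i := by nlinarith
  have hdi : 0 < d - i := by linarith
  exact div_pos (mul_pos (mul_pos (by linarith) (by linarith)) hroot) (by positivity)

end

/-- For every `i ≥ 0` there is `d0(i)` such that for all `d ≥ d0(i)`, the function `f`,
on its domain `{c : c·d > i}`, satisfies: `f(1) = 0`, `f` is strictly decreasing on
`[i/(d-i), 1]`, strictly increasing on `[1, ∞)`, and hence nonnegative on `[i/(d-i), ∞)`. -/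
theorem fErr_monotone_and_nonneg (i : ℕ) :
    ∃ d0 : ℝ, ∀ d : ℝ, d0 ≤ d →
      fErr i d 1 = 0 ∧
      StrictAntiOn (fErr i d) (Set.Icc ((i : ℝ)/(d - i)) 1 ∩ {c : ℝ | (i : ℝ) < c * d}) ∧
      StrictMonoOn (fErr i d) (Set.Ici 1) ∧
      (∀ c : ℝ, (i : ℝ)/(d - i) ≤ c → (i : ℝ) < c * d → 0 ≤ fErr i d c) := by
  refine ⟨2 * i + 1, fun d hd => ?_⟩
  have hid : (i : ℝ) < d := by linarith [Nat.cast_nonneg (α := ℝ) i]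
  have hanti := strictAntiOn_fErr hid
  have hmono := strictMonoOn_fErr hid (by linarith)
  refine ⟨fErr_one i d, hanti, hmono, fun c hac hcd => ?_⟩
  rw [← fErr_one i d]
  rcases le_or_gt 1 c with hc1 | hc1
  · exact hmono.monotoneOn self_mem_Ici hc1 hc1
  · have ha1 : (i : ℝ) / (d - i) ≤ 1 := by rw [div_le_one (by linarith)]; linarith
    exact (hanti ⟨⟨hac, hc1.le⟩, hcd⟩ ⟨⟨ha1, le_rfl⟩, by simpa using hid⟩ hc1).le
end

section
/- For every integer k ≥ 1 and every real ε > 0 there exist n0 and d0 such that the following holds: if F is the forest consisting of k pairwise disjoint edges (so 2k vertices and k edges) and G is any finite simple graph on n ≥ n0 vertices with average degree d = 2|E(G)|/n ≥ d0, then the number of injective homomorphisms from F to G is at least (1 − ε)·n(n−2)(n−4)···(n−2k+2)·d(d−2)(d−4)···(d−2k+2). -/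
/-- The forest consisting of `k` pairwise disjoint edges (a perfect matching on `2k` vertices). -/
def matchingGraph (k : ℕ) : SimpleGraph (Fin k × Fin 2) where
  Adj a b := a.1 = b.1 ∧ a.2 ≠ b.2
  symm := by
    constructor
    intro a b h
    exact ⟨h.1.symm, h.2.symm⟩
  loopless := by
    constructor
    intro a h
    exact h.2 rfl

/-!
Extend labelled copies of the `k`-matching greedily. A copy uses `2k` vertices, which are
endpoints of at most `4kn` darts of `G`, so it extends by a new edge in at least
`2|E(G)| - 4kn = n(d - 4k)` ways. Hence `G` contains at least `∏_{j<k} n(d - 4j)` copies.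
Finally `n(n-2)⋯(n-2k+2) ≤ nᵏ`, while `(1-ε)·d(d-2)⋯(d-2k+2) ≤ d(d-4)⋯(d-4k+4)` for large `d`
by Bernoulli's inequality.
-/

open Finset

section Estimates

lemma one_sub_card_mul_mul_prod_le_prod {ι : Type*} (s : Finset ι) {x y : ι → ℝ} {δ : ℝ}
    (hδ : δ ≤ 1) (hx : ∀ i ∈ s, 0 ≤ x i) (hxy : ∀ i ∈ s, (1 - δ) * x i ≤ y i) :
    (1 - #s * δ) * ∏ i ∈ s, x i ≤ ∏ i ∈ s, y i := by
  have bernoulli : 1 - #s * δ ≤ (1 - δ) ^ #s := by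
    simpa using one_add_mul_sub_le_pow (by linarith : (-1 : ℝ) ≤ 1 - δ) #s
  calc (1 - #s * δ) * ∏ i ∈ s, x i ≤ (1 - δ) ^ #s * ∏ i ∈ s, x i :=
        mul_le_mul_of_nonneg_right bernoulli (prod_nonneg hx)
    _ = ∏ i ∈ s, (1 - δ) * x i := by rw [prod_mul_distrib, prod_const]
    _ ≤ ∏ i ∈ s, y i :=
        prod_le_prod (fun i hi => mul_nonneg (by linarith) (hx i hi)) hxy

variable {x c : ℝ} {k : ℕ}

lemma sub_mul_nonneg_of_mem_range (hc : 0 ≤ c) (h : c * k ≤ x) {i : ℕ} (hi : i ∈ range k) :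
    0 ≤ x - c * i := by
  have : (i : ℝ) ≤ k := by exact_mod_cast (mem_range.mp hi).le
  nlinarith

lemma prod_range_sub_mul_nonneg (hc : 0 ≤ c) (h : c * k ≤ x) :
    0 ≤ ∏ i ∈ range k, (x - c * i) :=
  prod_nonneg fun _ hi => sub_mul_nonneg_of_mem_range hc h hi

lemma prod_range_sub_mul_le_pow (hc : 0 ≤ c) (h : c * k ≤ x) :
    ∏ i ∈ range k, (x - c * i) ≤ x ^ k := by
  calc ∏ i ∈ range k, (x - c * i) ≤ ∏ _i ∈ range k, x :=
        prod_le_prod (fun _ hi => sub_mul_nonneg_of_mem_range hc h hi)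
          fun i _ => sub_le_self x (by positivity)
    _ = x ^ k := by rw [prod_const, card_range]

lemma one_sub_mul_prod_range_sub_two_mul_le {ε d : ℝ} (hε : 0 < ε)
    (hd : 4 * k + 2 * k ^ 2 / ε ≤ d) :
    (1 - ε) * ∏ i ∈ range k, (d - 2 * i) ≤ ∏ i ∈ range k, (d - 4 * i) := by
  set δ := ε / (k + ε) with hδ_def
  have hkε : 0 < (k : ℝ) + ε := by positivity
  have hδ₀ : 0 ≤ δ := by positivity
  have hδ₁ : δ ≤ 1 := by rw [hδ_def, div_le_one hkε]; linarith [(k.cast_nonneg : (0 : ℝ) ≤ k)]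
  have hkδ : k * δ ≤ ε := by
    rw [hδ_def, mul_div_assoc', div_le_iff₀ hkε]; nlinarith
  have hδd : δ * (2 * k + 2 * k ^ 2 / ε) = 2 * k := by
    rw [hδ_def]; field_simp; ring
  have hfactor : ∀ i ∈ range k, (1 - δ) * (d - 2 * i) ≤ d - 4 * i := by
    intro i hi
    have hik : (i : ℝ) ≤ k := by exact_mod_cast (mem_range.mp hi).le
    have : δ * (2 * k + 2 * k ^ 2 / ε) ≤ δ * (d - 2 * i) :=
      mul_le_mul_of_nonneg_left (by linarith) hδ₀
    nlinarith
  have hsub : 2 * (k : ℝ) ≤ d := by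
    have : 0 ≤ 2 * (k : ℝ) ^ 2 / ε := by positivity
    linarith
  calc (1 - ε) * ∏ i ∈ range k, (d - 2 * i)
      ≤ (1 - #(range k) * δ) * ∏ i ∈ range k, (d - 2 * i) := by
        rw [card_range]
        exact mul_le_mul_of_nonneg_right (by linarith)
          (prod_range_sub_mul_nonneg zero_le_two hsub)
    _ ≤ ∏ i ∈ range k, (d - 4 * i) :=
        one_sub_card_mul_mul_prod_le_prod _ hδ₁
          (fun _ hi => sub_mul_nonneg_of_mem_range zero_le_two hsub hi) hfactor

end Estimates

section Matchings

variable {β : Type}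

lemma forall_adj_matchingGraph_iff {G : SimpleGraph β} {k : ℕ} (f : Fin k × Fin 2 → β) :
    (∀ ⦃u v⦄, (matchingGraph k).Adj u v → G.Adj (f u) (f v)) ↔
      ∀ a, G.Adj (f (a, 0)) (f (a, 1)) := by
  refine ⟨fun h a => h ⟨rfl, Fin.zero_ne_one⟩, ?_⟩
  rintro h ⟨a, i⟩ ⟨b, j⟩ ⟨rfl : a = b, hij⟩
  fin_cases i <;> fin_cases j
  exacts [absurd rfl hij, h a, (h a).symm, absurd rfl hij]

def matchingCons {k : ℕ} (f : Fin k × Fin 2 → β) (u v : β) : Fin (k + 1) × Fin 2 → β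
  | (a, j) => Fin.cases (![u, v] j) (fun b => f (b, j)) a

variable {k : ℕ} {f f' : Fin k × Fin 2 → β} {u v u' v' : β}

@[simp]
lemma matchingCons_zero (j : Fin 2) : matchingCons f u v (0, j) = ![u, v] j := rfl

@[simp]
lemma matchingCons_succ (a : Fin k) (j : Fin 2) : matchingCons f u v (a.succ, j) = f (a, j) :=
  rfl

lemma matchingCons_inj :
    matchingCons f u v = matchingCons f' u' v' ↔ f = f' ∧ u = u' ∧ v = v' := by
  refine ⟨fun h => ⟨funext fun p => ?_, by simpa using congrFun h (0, 0),
    by simpa using congrFun h (0, 1)⟩, by rintro ⟨rfl, rfl, rfl⟩; rfl⟩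
  simpa using congrFun h (p.1.succ, p.2)

lemma matchingCons_injective (hf : Function.Injective f) (huv : u ≠ v)
    (hu : ∀ p, f p ≠ u) (hv : ∀ p, f p ≠ v) : Function.Injective (matchingCons f u v) := by
  have hnew : ∀ j p, ![u, v] j ≠ f p := by
    intro j p
    fin_cases j
    exacts [(hu p).symm, (hv p).symm]
  rintro ⟨a, i⟩ ⟨b, j⟩ h
  induction a using Fin.cases <;> induction b using Fin.cases <;>
    simp only [matchingCons_zero, matchingCons_succ] at h
  · fin_cases i <;> fin_cases j <;> simp_all [eq_comm]
  · exact absurd h (hnew _ _)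
  · exact absurd h.symm (hnew _ _)
  · simpa using hf h

lemma card_mul_avgDeg [Fintype β] (G : SimpleGraph β) [DecidableRel G.Adj] :
    (Fintype.card β : ℝ) * avgDeg G = 2 * #G.edgeFinset := by
  rcases isEmpty_or_nonempty β with hβ | hβ
  · simp [avgDeg, eq_empty_of_isEmpty]
  · rw [avgDeg, Nat.card_eq_fintype_card, ← SimpleGraph.edgeFinset_card]
    field_simp

variable [Fintype β] [DecidableEq β] (G : SimpleGraph β) [DecidableRel G.Adj]

lemma two_mul_card_edgeFinset_le (R : Finset β) :
    2 * #G.edgeFinset ≤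
      #{d : G.Dart | d.fst ∉ R ∧ d.snd ∉ R} + 2 * #R * Fintype.card β := by
  rw [← G.dart_card_eq_twice_card_edges, ← card_univ,
    ← card_filter_add_card_filter_not (fun d : G.Dart => d.fst ∉ R ∧ d.snd ∉ R)]
  gcongr
  calc #{d : G.Dart | ¬(d.fst ∉ R ∧ d.snd ∉ R)} ≤ #(R ×ˢ univ ∪ univ ×ˢ R) :=
        card_le_card_of_injOn SimpleGraph.Dart.toProd
          (fun d hd => by simp only [coe_filter, Set.mem_ofPred_eq] at hd; simp; tauto)
          SimpleGraph.Dart.toProd_injective.injOn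
    _ ≤ #(R ×ˢ univ) + #(univ ×ˢ R) := card_union_le _ _
    _ = 2 * #R * Fintype.card β := by rw [card_product, card_product, card_univ]; ring

def matchingCopies (k : ℕ) : Finset (Fin k × Fin 2 → β) :=
  {f | Function.Injective f ∧ ∀ a, G.Adj (f (a, 0)) (f (a, 1))}

lemma monCount_matchingGraph (k : ℕ) :
    monCount (matchingGraph k) G = #(matchingCopies G k) := by
  rw [monCount, ← Nat.card_eq_finsetCard]
  exact Nat.card_congr (Equiv.subtypeEquivRight fun f => by
    rw [forall_adj_matchingGraph_iff]; simp [matchingCopies])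

lemma matchingCons_mem_matchingCopies (hf : f ∈ matchingCopies G k) (d : G.Dart)
    (hd : d.fst ∉ univ.image f ∧ d.snd ∉ univ.image f) :
    matchingCons f d.fst d.snd ∈ matchingCopies G (k + 1) := by
  simp only [matchingCopies, mem_filter, mem_univ, true_and, mem_image, not_exists] at hf hd ⊢
  refine ⟨matchingCons_injective hf.1 d.adj.ne hd.1 hd.2, fun a => ?_⟩
  induction a using Fin.cases
  · exact d.adj
  · exact hf.2 _

lemma card_matchingCopies_mul_le (k : ℕ) :
    #(matchingCopies G k) * (2 * #G.edgeFinset - 4 * k * Fintype.card β : ℝ) ≤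
      #(matchingCopies G (k + 1)) := by
  set extensions := fun f : Fin k × Fin 2 → β =>
    ({d : G.Dart | d.fst ∉ univ.image f ∧ d.snd ∉ univ.image f} : Finset G.Dart)
  have hcard : #((matchingCopies G k).sigma extensions) ≤ #(matchingCopies G (k + 1)) := by
    refine card_le_card_of_injOn (fun x => matchingCons x.1 x.2.fst x.2.snd) ?_ ?_
    · rintro ⟨f, d⟩ hfd
      simp only [coe_sigma, Set.mem_sigma_iff, mem_coe, extensions, mem_filter] at hfd
      exact matchingCons_mem_matchingCopies G hfd.1 d hfd.2.2
    · rintro ⟨f, d⟩ - ⟨f', d'⟩ - h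
      obtain ⟨rfl, h₁, h₂⟩ := matchingCons_inj.mp h
      exact Sigma.ext rfl (heq_of_eq (SimpleGraph.Dart.ext _ _ (Prod.ext h₁ h₂)))
  have hextensions : ∀ f ∈ matchingCopies G k,
      (2 * #G.edgeFinset - 4 * k * Fintype.card β : ℝ) ≤ #(extensions f) := by
    intro f _
    have himage : 2 * #(univ.image f) ≤ 4 * k := by
      have : #(univ.image f) ≤ k * 2 := by simpa using card_image_le (s := univ) (f := f)
      omega
    have hfree : 2 * #G.edgeFinset ≤
        #(extensions f) + 2 * #(univ.image f) * Fintype.card β :=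
      two_mul_card_edgeFinset_le G _
    have : 2 * #G.edgeFinset ≤ #(extensions f) + 4 * k * Fintype.card β :=
      hfree.trans (by gcongr)
    rw [sub_le_iff_le_add]
    exact_mod_cast this
  calc #(matchingCopies G k) * (2 * #G.edgeFinset - 4 * k * Fintype.card β : ℝ)
      = ∑ _f ∈ matchingCopies G k, (2 * #G.edgeFinset - 4 * k * Fintype.card β : ℝ) := by
        rw [sum_const, nsmul_eq_mul]
    _ ≤ ∑ f ∈ matchingCopies G k, (#(extensions f) : ℝ) := sum_le_sum hextensions
    _ = #((matchingCopies G k).sigma extensions) := by rw [card_sigma]; push_cast; rfl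
    _ ≤ #(matchingCopies G (k + 1)) := by exact_mod_cast hcard

lemma prod_le_card_matchingCopies {k : ℕ} (hd : 4 * k ≤ avgDeg G) :
    ∏ j ∈ range k, (Fintype.card β * (avgDeg G - 4 * j)) ≤ (#(matchingCopies G k) : ℝ) := by
  induction k with
  | zero =>
    have : (isEmptyElim : Fin 0 × Fin 2 → β) ∈ matchingCopies G 0 :=
      mem_filter.mpr ⟨mem_univ _, Function.injective_of_subsingleton _, fun a => a.elim0⟩
    simpa using card_pos.mpr ⟨_, this⟩
  | succ k ih =>
    push_cast at hd
    rw [prod_range_succ]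
    calc (∏ j ∈ range k, (Fintype.card β * (avgDeg G - 4 * j))) *
          (Fintype.card β * (avgDeg G - 4 * k))
        ≤ #(matchingCopies G k) * (Fintype.card β * (avgDeg G - 4 * k)) :=
          mul_le_mul_of_nonneg_right (ih (by linarith))
            (mul_nonneg (Nat.cast_nonneg _) (by linarith))
      _ = #(matchingCopies G k) * (2 * #G.edgeFinset - 4 * k * Fintype.card β) := by
          rw [mul_sub, card_mul_avgDeg]; ring
      _ ≤ #(matchingCopies G (k + 1)) := card_matchingCopies_mul_le G k

end Matchings

theorem matching_count_lower_bound_general (k : ℕ) (ε : ℝ) (hε : 0 < ε) :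
    ∃ (n0 : ℕ) (d0 : ℝ), ∀ (β : Type) [Fintype β] (G : SimpleGraph β),
      n0 ≤ Fintype.card β → d0 ≤ avgDeg G →
      (1 - ε) * (∏ i ∈ Finset.range k, ((Fintype.card β : ℝ) - 2 * i)) *
          (∏ i ∈ Finset.range k, (avgDeg G - 2 * i)) ≤
        (monCount (matchingGraph k) G : ℝ) := by
  refine ⟨2 * k, 4 * k + 2 * k ^ 2 / ε, fun β _ G hn hd => ?_⟩
  classical
  have hnk : 2 * (k : ℝ) ≤ Fintype.card β := by exact_mod_cast hn
  set n : ℝ := (Fintype.card β : ℝ)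
  have hd4 : 4 * (k : ℝ) ≤ avgDeg G := by
    have : 0 ≤ 2 * (k : ℝ) ^ 2 / ε := by positivity
    linarith
  rw [monCount_matchingGraph]
  calc (1 - ε) * (∏ i ∈ range k, (n - 2 * i)) * ∏ i ∈ range k, (avgDeg G - 2 * i)
      = (∏ i ∈ range k, (n - 2 * i)) * ((1 - ε) * ∏ i ∈ range k, (avgDeg G - 2 * i)) := by
        ring
    _ ≤ (∏ i ∈ range k, (n - 2 * i)) * ∏ i ∈ range k, (avgDeg G - 4 * i) :=
        mul_le_mul_of_nonneg_left (one_sub_mul_prod_range_sub_two_mul_le hε hd)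
          (prod_range_sub_mul_nonneg zero_le_two hnk)
    _ ≤ n ^ k * ∏ i ∈ range k, (avgDeg G - 4 * i) :=
        mul_le_mul_of_nonneg_right (prod_range_sub_mul_le_pow zero_le_two hnk)
          (prod_range_sub_mul_nonneg zero_le_four hd4)
    _ = ∏ i ∈ range k, (n * (avgDeg G - 4 * i)) := by
        rw [prod_mul_distrib, prod_const, card_range]
    _ ≤ #(matchingCopies G k) := prod_le_card_matchingCopies G hd4

/-- Counting matchings: for `n` and `d` large enough, any `n`-vertex graph `G` of average
degree `d` contains at least `(1-ε)·n(n-2)⋯(n-2k+2)·d(d-2)⋯(d-2k+2)` labeled copies of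
the forest of `k` disjoint edges. -/
theorem matching_count_lower_bound (k : ℕ) (hk : 1 ≤ k) (ε : ℝ) (hε : 0 < ε) :
    ∃ (n0 : ℕ) (d0 : ℝ), ∀ (β : Type) [Fintype β] (G : SimpleGraph β),
      n0 ≤ Fintype.card β → d0 ≤ avgDeg G →
      (1 - ε) * (∏ i ∈ Finset.range k, ((Fintype.card β : ℝ) - 2 * i)) *
          (∏ i ∈ Finset.range k, (avgDeg G - 2 * i)) ≤
        (monCount (matchingGraph k) G : ℝ) :=
  matching_count_lower_bound_general k ε hε
end

section
/- Let t ≥ 1 be an integer, let T be a tree with t edges, and let G be a finite simple graph on n vertices with average degree d = 2|E(G)|/n. Then the number of (not necessarily injective) graph homomorphisms from T to G is at least n·d^t. -/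
/-- Number of (not necessarily injective) graph homomorphisms from `T` to `G`. -/
noncomputable def homCount {α β : Type} (T : SimpleGraph α) (G : SimpleGraph β) : ℕ :=
  Nat.card {f : α → β // ∀ ⦃u v : α⦄, T.Adj u v → G.Adj (f u) (f v)}

/-!
Run the random walk on `G` along the tree, starting at the root from the stationary distribution
`deg x / 2|E|`. Its law is supported on homomorphisms and every vertex of the tree has the
stationary distribution as marginal, so its entropy is `log 2|E| + (t - 1) · E[log deg]`. By
convexity of `x log x` this is at least `log (n d^t)`, and by the same convexity an entropy is at
most the logarithm of the size of the support.
-/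

open Finset Real

theorem Real.sum_mul_log_div_card_le_sum_mul_log {ι : Type*} (s : Finset ι) (f : ι → ℝ)
    (hf : ∀ i ∈ s, 0 ≤ f i) :
    (∑ i ∈ s, f i) * log ((∑ i ∈ s, f i) / #s) ≤ ∑ i ∈ s, f i * log (f i) := by
  rcases s.eq_empty_or_nonempty with rfl | hs
  · simp
  have hn : (0 : ℝ) < #s := by exact_mod_cast hs.card_pos
  have jensen := convexOn_mul_log.map_sum_le (t := s) (w := fun _ => (#s : ℝ)⁻¹) (p := f)
    (fun _ _ => by positivity) (by simp [hn.ne']) hf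
  simp only [smul_eq_mul, inv_mul_eq_div, ← sum_div] at jensen
  calc (∑ i ∈ s, f i) * log ((∑ i ∈ s, f i) / #s)
      = #s * ((∑ i ∈ s, f i) / #s * log ((∑ i ∈ s, f i) / #s)) := by field_simp
    _ ≤ #s * ((∑ i ∈ s, f i * log (f i)) / #s) := by gcongr
    _ = ∑ i ∈ s, f i * log (f i) := by field_simp

namespace SimpleGraph

section RandomWalk

variable {V : Type*} [Fintype V] (G : SimpleGraph V) [DecidableRel G.Adj]

noncomputable def transProb (x y : V) : ℝ := if G.Adj x y then (G.degree x : ℝ)⁻¹ else 0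

variable {G}

lemma transProb_nonneg (x y : V) : 0 ≤ G.transProb x y := by
  unfold transProb; split_ifs <;> positivity

lemma degree_mul_transProb (x y : V) :
    G.degree x * G.transProb x y = if G.Adj x y then 1 else 0 := by
  unfold transProb
  split_ifs with h
  · exact mul_inv_cancel₀ (Nat.cast_ne_zero.2 ((G.degree_pos_iff_exists_adj x).2 ⟨y, h⟩).ne')
  · exact mul_zero _

lemma transProb_of_adj {x y : V} (h : G.Adj x y) : G.transProb x y = (G.degree x : ℝ)⁻¹ :=
  if_pos h

lemma sum_transProb {x : V} (hx : G.degree x ≠ 0) : ∑ y, G.transProb x y = 1 := by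
  have : ∑ y, G.degree x * G.transProb x y = G.degree x := by
    simp_rw [degree_mul_transProb, sum_boole, ← G.neighborFinset_eq_filter,
      card_neighborFinset_eq_degree]
  rw [← mul_sum] at this
  exact (mul_eq_left₀ (Nat.cast_ne_zero.2 hx)).1 this

/-- Stationarity of the degree distribution. -/
lemma sum_degree_mul_sum_transProb (f : V → ℝ) :
    ∑ x, G.degree x * ∑ y, G.transProb x y * f y = ∑ y, G.degree y * f y := by
  simp_rw [mul_sum, ← mul_assoc, degree_mul_transProb]
  rw [sum_comm]
  refine sum_congr rfl fun y _ => ?_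
  rw [← sum_mul, sum_boole]
  simp_rw [G.adj_comm _ y, ← G.neighborFinset_eq_filter, card_neighborFinset_eq_degree]

end RandomWalk

section TreeWalk

variable {V : Type*} [Fintype V] {G : SimpleGraph V} [DecidableRel G.Adj] {t : ℕ}

variable (G) in
/-- Unnormalised law of the random walk on `G` indexed by the tree on `Fin (t + 1)` in which
vertex `i + 1` hangs off `par i`, started from the degree distribution. -/
noncomputable def treeWalkWeight (par : Fin t → Fin (t + 1)) (ψ : Fin (t + 1) → V) : ℝ :=
  G.degree (ψ 0) * ∏ i, G.transProb (ψ (par i)) (ψ i.succ)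

lemma treeWalkWeight_nonneg (par : Fin t → Fin (t + 1)) (ψ : Fin (t + 1) → V) :
    0 ≤ G.treeWalkWeight par ψ :=
  mul_nonneg (Nat.cast_nonneg _) (prod_nonneg fun _ _ => transProb_nonneg _ _)

lemma treeWalkWeight_snoc (q : Fin (t + 1) → Fin (t + 1)) (g : Fin (t + 1) → V) (y : V) :
    G.treeWalkWeight (fun i => (q i).castSucc) (Fin.snoc g y) =
      G.treeWalkWeight (fun i => q i.castSucc) g * G.transProb (g (q (Fin.last t))) y := by
  simp only [treeWalkWeight, Fin.prod_univ_castSucc, Fin.succ_castSucc, Fin.succ_last,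
    Fin.snoc_castSucc, Fin.snoc_last, mul_assoc]
  rfl

lemma treeWalkWeight_eq_zero_of_degree_eq_zero (par : Fin t → Fin (t + 1))
    {ψ : Fin (t + 1) → V} {j : Fin (t + 1)} (hj : G.degree (ψ j) = 0) :
    G.treeWalkWeight par ψ = 0 := by
  induction j using Fin.cases with
  | zero => simp [treeWalkWeight, hj]
  | succ i =>
    refine mul_eq_zero_of_right _ (prod_eq_zero (mem_univ i) (if_neg fun h => ?_))
    exact (G.degree_pos_iff_exists_adj _).2 ⟨_, h.symm⟩ |>.ne' hj

lemma treeWalkWeight_mul_sum_transProb (par : Fin t → Fin (t + 1)) (ψ : Fin (t + 1) → V)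
    (j : Fin (t + 1)) :
    G.treeWalkWeight par ψ * ∑ y, G.transProb (ψ j) y = G.treeWalkWeight par ψ := by
  by_cases hj : G.degree (ψ j) = 0
  · simp [treeWalkWeight_eq_zero_of_degree_eq_zero par hj]
  · rw [sum_transProb hj, mul_one]

/-- Every vertex of the tree is distributed according to the degree distribution. -/
theorem sum_treeWalkWeight_mul (par : Fin t → Fin (t + 1)) (hpar : ∀ i, par i ≤ i.castSucc)
    (f : V → ℝ) (v : Fin (t + 1)) :
    ∑ ψ, G.treeWalkWeight par ψ * f (ψ v) = ∑ x, G.degree x * f x := by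
  induction t generalizing f with
  | zero =>
    rw [Fin.fin_one_eq_zero v, ← (Equiv.funUnique (Fin 1) V).symm.sum_comp]
    simp [treeWalkWeight]
    rfl
  | succ t ih =>
    obtain ⟨q, rfl⟩ : ∃ q : Fin (t + 1) → Fin (t + 1), par = fun i => (q i).castSucc :=
      ⟨fun i => (par i).castLT ((hpar i).trans_lt i.castSucc_lt_last), rfl⟩
    have hq : ∀ i : Fin t, q i.castSucc ≤ i.castSucc := fun i =>
      Fin.castSucc_le_castSucc_iff.1 (hpar i.castSucc)
    have sum_snoc (F : (Fin (t + 2) → V) → ℝ) :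
        ∑ ψ, F ψ = ∑ g, ∑ y, F (Fin.snoc g y) :=
      ((Fin.snocEquiv fun _ => V).sum_comp F).symm.trans (Fintype.sum_prod_type_right _)
    simp only [sum_snoc, treeWalkWeight_snoc]
    induction v using Fin.lastCases with
    | last =>
      simp_rw [Fin.snoc_last, mul_assoc, ← mul_sum]
      rw [ih _ hq (fun x => ∑ y, G.transProb x y * f y), sum_degree_mul_sum_transProb]
    | cast v =>
      simp_rw [Fin.snoc_castSucc, ← sum_mul, ← mul_sum, treeWalkWeight_mul_sum_transProb]
      exact ih _ hq f v

lemma adj_of_treeWalkWeight_ne_zero {par : Fin t → Fin (t + 1)} {ψ : Fin (t + 1) → V}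
    (h : G.treeWalkWeight par ψ ≠ 0) (i : Fin t) : G.Adj (ψ (par i)) (ψ i.succ) := by
  by_contra hadj
  exact h (mul_eq_zero_of_right _ (prod_eq_zero (mem_univ i) (if_neg hadj)))

lemma treeWalkWeight_mul_log (par : Fin t → Fin (t + 1)) (ψ : Fin (t + 1) → V) :
    G.treeWalkWeight par ψ * log (G.treeWalkWeight par ψ) =
      G.treeWalkWeight par ψ * (log (G.degree (ψ 0)) - ∑ i, log (G.degree (ψ (par i)))) := by
  by_cases h : G.treeWalkWeight par ψ = 0
  · simp [h]
  have hadj := adj_of_treeWalkWeight_ne_zero h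
  have hdeg (i : Fin t) : (G.degree (ψ (par i)) : ℝ)⁻¹ ≠ 0 :=
    inv_ne_zero (Nat.cast_ne_zero.2 ((G.degree_pos_iff_exists_adj _).2 ⟨_, hadj i⟩).ne')
  have hroot : (G.degree (ψ 0) : ℝ) ≠ 0 := left_ne_zero_of_mul h
  simp only [treeWalkWeight, transProb_of_adj (hadj _)]
  rw [log_mul hroot (prod_ne_zero_iff.2 fun i _ => hdeg i), log_prod fun i _ => hdeg i]
  simp only [log_inv, sum_neg_distrib, sub_eq_add_neg]

theorem sum_treeWalkWeight_mul_log (par : Fin t → Fin (t + 1))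
    (hpar : ∀ i, par i ≤ i.castSucc) :
    ∑ ψ, G.treeWalkWeight par ψ * log (G.treeWalkWeight par ψ) =
      (1 - t) * ∑ x, G.degree x * log (G.degree x) := by
  conv_lhs => simp only [treeWalkWeight_mul_log, mul_sub, mul_sum, sum_sub_distrib]
  rw [sum_comm, sum_treeWalkWeight_mul par hpar (fun x => log (G.degree x)) 0]
  simp_rw [sum_treeWalkWeight_mul par hpar (fun x => log (G.degree x)) (par _)]
  simp only [sum_const, card_univ, Fintype.card_fin, nsmul_eq_mul]
  ring

end TreeWalk

section AvgDeg

variable {V : Type} [Fintype V] {G : SimpleGraph V} [DecidableRel G.Adj] {t : ℕ}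

variable (G) in
lemma avgDeg_eq_sum_degree_div :
    avgDeg G = (∑ x, (G.degree x : ℝ)) / Fintype.card V := by
  classical
  rw [avgDeg, ← Nat.cast_sum, sum_degrees_eq_twice_card_edges, Nat.card_eq_fintype_card,
    ← edgeFinset_card]
  push_cast
  rfl

theorem card_mul_avgDeg_pow_le_card_filter_adj (ht : 1 ≤ t) (par : Fin t → Fin (t + 1))
    (hpar : ∀ i, par i ≤ i.castSucc) :
    (Fintype.card V : ℝ) * avgDeg G ^ t ≤
      #{ψ : Fin (t + 1) → V | ∀ i, G.Adj (ψ (par i)) (ψ i.succ)} := by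
  set n : ℝ := (Fintype.card V : ℝ)
  set M : ℝ := ∑ x, (G.degree x : ℝ)
  set K : ℝ := ∑ x, G.degree x * log (G.degree x)
  set S : Finset (Fin (t + 1) → V) := {ψ | G.treeWalkWeight par ψ ≠ 0}
  have hS : S ⊆ ({ψ | ∀ i, G.Adj (ψ (par i)) (ψ i.succ)} : Finset _) := fun ψ hψ => by
    simpa using adj_of_treeWalkWeight_ne_zero (mem_filter.1 hψ).2
  refine le_trans ?_ (Nat.cast_le.2 (card_le_card hS))
  rw [avgDeg_eq_sum_degree_div]
  rcases (sum_nonneg fun x _ => Nat.cast_nonneg _ : 0 ≤ M).eq_or_lt with hM | hM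
  · rw [← hM, zero_div, zero_pow (by omega), mul_zero]
    positivity
  have hn : 0 < n := by
    obtain ⟨x, -, -⟩ := exists_ne_zero_of_sum_ne_zero hM.ne'
    exact Nat.cast_pos.2 (Fintype.card_pos_iff.2 ⟨x⟩)
  have hmass : ∑ ψ ∈ S, G.treeWalkWeight par ψ = M := by
    rw [sum_filter_ne_zero]
    simpa using sum_treeWalkWeight_mul par hpar (fun _ => 1) 0
  have hentropy :
      ∑ ψ ∈ S, G.treeWalkWeight par ψ * log (G.treeWalkWeight par ψ) = (1 - t) * K := by
    rw [sum_filter_of_ne fun ψ _ h => left_ne_zero_of_mul h]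
    exact sum_treeWalkWeight_mul_log par hpar
  have hSpos : (0 : ℝ) < #S := by
    exact_mod_cast card_pos.2 (nonempty_of_sum_ne_zero (by rw [hmass]; exact hM.ne'))
  have gibbs := sum_mul_log_div_card_le_sum_mul_log S (G.treeWalkWeight par)
    fun ψ _ => treeWalkWeight_nonneg par ψ
  have jensen := sum_mul_log_div_card_le_sum_mul_log univ (fun x => (G.degree x : ℝ))
    fun x _ => Nat.cast_nonneg _
  rw [hmass, hentropy, log_div hM.ne' hSpos.ne'] at gibbs
  rw [card_univ, log_div hM.ne' hn.ne'] at jensen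
  have key : M * (log M - log #S) ≤ M * ((1 - t) * (log M - log n)) := calc
    _ ≤ (1 - t) * K := gibbs
    _ ≤ (1 - t) * (M * (log M - log n)) :=
      mul_le_mul_of_nonpos_left jensen (by linarith [(Nat.one_le_cast.2 ht : (1 : ℝ) ≤ t)])
    _ = M * ((1 - t) * (log M - log n)) := by ring
  have hlog := le_of_mul_le_mul_left key hM
  rw [← log_le_log_iff (by positivity) hSpos, log_mul hn.ne' (by positivity), log_pow,
    log_div hM.ne' hn.ne']
  linarith

end AvgDeg

section ParentEnumeration

variable {α : Type*} {T : SimpleGraph α} {t : ℕ}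

lemma Connected.exists_adj_dist_lt (hT : T.Connected) {r u : α} (hu : u ≠ r) :
    ∃ w, T.Adj w u ∧ T.dist r w < T.dist r u := by
  obtain ⟨p, hp⟩ := hT.exists_walk_length_eq_dist r u
  have hnil : ¬ p.Nil := fun h => hu h.eq.symm
  refine ⟨p.penultimate, p.adj_penultimate hnil, ?_⟩
  calc T.dist r p.penultimate ≤ p.dropLast.length := dist_le _
    _ < p.length := by
      rw [Walk.length_dropLast]
      exact Nat.sub_lt (Walk.not_nil_iff_lt_length.1 hnil) one_pos
    _ = T.dist r u := hp

variable [Fintype α]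

theorem Connected.exists_parent_enumeration (hT : T.Connected) (hcard : Fintype.card α = t + 1) :
    ∃ (v : Fin (t + 1) ≃ α) (par : Fin t → Fin (t + 1)),
      (∀ i, par i ≤ i.castSucc) ∧ ∀ i, T.Adj (v (par i)) (v i.succ) := by
  obtain ⟨r⟩ := hT.nonempty
  let key (a : α) : ℕ ×ₗ Fin (t + 1) := toLex (T.dist r a, Fintype.equivFinOfCardEq hcard a)
  have hkey : Function.Injective key := fun a b h =>
    (Fintype.equivFinOfCardEq hcard).injective (Prod.ext_iff.1 (toLex.injective h)).2
  let _ : LinearOrder α := LinearOrder.lift' key hkey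
  let v := Fintype.orderIsoFinOfCardEq α hcard
  have lt_of_dist_lt {a b : α} (h : T.dist r a < T.dist r b) : a < b :=
    Prod.Lex.toLex_lt_toLex.2 (Or.inl h)
  have hv0 : v 0 = r := by
    by_contra h
    obtain ⟨w, -, hw⟩ := hT.exists_adj_dist_lt h
    exact Fin.not_lt_zero (v.symm w) (by simpa using v.symm.lt_iff_lt.2 (lt_of_dist_lt hw))
  have hparent (k : Fin t) : ∃ j, j ≤ k.castSucc ∧ T.Adj (v j) (v k.succ) := by
    obtain ⟨w, hadj, hw⟩ := hT.exists_adj_dist_lt (u := v k.succ)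
      (hv0 ▸ v.injective.ne (Fin.succ_ne_zero k))
    refine ⟨v.symm w, Fin.le_castSucc_iff.2 ?_, by rwa [OrderIso.apply_symm_apply]⟩
    simpa using v.symm.lt_iff_lt.2 (lt_of_dist_lt hw)
  choose par hpar hadj using hparent
  exact ⟨v.toEquiv, par, hpar, hadj⟩

variable [DecidableEq α] (v : Fin (t + 1) ≃ α) (par : Fin t → Fin (t + 1))

lemma IsTree.edgeFinset_eq_image [Fintype T.edgeSet] (hT : T.IsTree)
    (hcard : Fintype.card α = t + 1) (hpar : ∀ i, par i ≤ i.castSucc)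
    (hadj : ∀ i, T.Adj (v (par i)) (v i.succ)) :
    T.edgeFinset = univ.image fun i => s(v (par i), v i.succ) := by
  have hinj : Function.Injective fun i => s(v (par i), v i.succ) := by
    intro i j h
    rcases Sym2.eq_iff.1 h with ⟨-, h⟩ | ⟨h₁, h₂⟩
    · exact Fin.succ_injective _ (v.injective h)
    · -- the parent of a vertex comes before it, so two edges cannot be each other's reverse
      have h₁ := v.injective h₁
      have h₂ := v.injective h₂
      have := (hpar i).trans_lt Fin.castSucc_lt_succ
      have := (hpar j).trans_lt Fin.castSucc_lt_succ
      simp_all [lt_asymm]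
  refine (eq_of_subset_of_card_le (fun e he => ?_) ?_).symm
  · obtain ⟨i, -, rfl⟩ := mem_image.1 he
    exact mem_edgeFinset.2 ((mem_edgeSet T).2 (hadj i))
  · have := hT.card_edgeFinset
    rw [card_image_of_injective _ hinj, card_univ, Fintype.card_fin]
    omega

end ParentEnumeration

theorem IsTree.homCount_eq_card {α β : Type} [Fintype α] [DecidableEq α] [Fintype β]
    {T : SimpleGraph α} [Fintype T.edgeSet] (G : SimpleGraph β) [DecidableRel G.Adj] {t : ℕ}
    (hT : T.IsTree) (hcard : Fintype.card α = t + 1) (v : Fin (t + 1) ≃ α)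
    (par : Fin t → Fin (t + 1)) (hpar : ∀ i, par i ≤ i.castSucc)
    (hadj : ∀ i, T.Adj (v (par i)) (v i.succ)) :
    homCount T G = #{ψ : Fin (t + 1) → β | ∀ i, G.Adj (ψ (par i)) (ψ i.succ)} := by
  have hedge := hT.edgeFinset_eq_image v par hcard hpar hadj
  have hiff (ψ : Fin (t + 1) → β) : (∀ i, G.Adj (ψ (par i)) (ψ i.succ)) ↔
      ∀ ⦃a b⦄, T.Adj a b → G.Adj (ψ (v.symm a)) (ψ (v.symm b)) := by
    refine ⟨fun h a b hab => ?_, fun h i => by simpa using h (hadj i)⟩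
    obtain ⟨i, -, hi⟩ := mem_image.1 (hedge ▸ mem_edgeFinset.2 ((mem_edgeSet T).2 hab))
    have hmap := congrArg (Sym2.map (ψ ∘ v.symm)) hi
    simp only [Sym2.map_mk, Function.comp, Equiv.symm_apply_apply] at hmap
    exact (mem_edgeSet G).1 (hmap ▸ (mem_edgeSet G).2 (h i))
  rw [homCount, ← Nat.card_congr ((v.arrowCongr (Equiv.refl β)).subtypeEquiv hiff),
    Nat.card_eq_fintype_card, Fintype.card_subtype]

end SimpleGraph

/-- Sidorenko's conjecture for trees: if `T` is a tree with `t` edges and `G` is an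
`n`-vertex graph with average degree `d`, then `|Hom(T,G)| ≥ n·d^t`. -/
theorem tree_hom_count_lower_bound (t : ℕ) (ht : 1 ≤ t)
    (α β : Type) [Fintype α] [Fintype β]
    (T : SimpleGraph α) (G : SimpleGraph β)
    (hT : T.IsTree) (hcard : Fintype.card α = t + 1) :
    (Fintype.card β : ℝ) * avgDeg G ^ t ≤ (homCount T G : ℝ) := by
  classical
  obtain ⟨v, par, hpar, hadj⟩ := hT.connected.exists_parent_enumeration hcard
  rw [hT.homCount_eq_card G hcard v par hpar hadj]
  exact SimpleGraph.card_mul_avgDeg_pow_le_card_filter_adj (G := G) ht par hpar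
end

section
/- Let A be an n×n real symmetric matrix with all entries nonnegative, let z ∈ ℝⁿ be a vector with all entries nonnegative, and let t ≥ 1 be an integer. Then ⟨A^t z, z⟩ · ⟨z, z⟩^{t−1} ≥ ⟨A z, z⟩^t; in particular, if ⟨z, z⟩ = 1 then ⟨A^t z, z⟩ ≥ ⟨A z, z⟩^t. -/
open Matrix Finset

/-!
For odd `t = 2m + 1` and entrywise positive `A` and `z`, put `wₖ = Aᵏz`. For each pair `(i, j)`,
AM-GM applied to the `t` numbers `wₘ(i) wₘ(j) / r^(2m)`, `r zᵢ² wₖ(j) / wₖ₊₁(i)` and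
`r zⱼ² wₖ(i) / wₖ₊₁(j)` (`k < m`), whose product telescopes to `(zᵢ zⱼ)ᵗ`, bounds `t zᵢ zⱼ`.
Weighting by `Aᵢⱼ` and summing, each of the `2m` families sums to `r ⟨z, z⟩` because
`∑ⱼ Aᵢⱼ wₖ(j) = wₖ₊₁(i)`, while the first sums to `⟨Aᵗz, z⟩ / r^(2m)`; the choice
`r = ⟨Az, z⟩ / ⟨z, z⟩` then gives the inequality, and nonnegative data are reached by continuity.
For even `t = 2k`, Cauchy–Schwarz gives `⟨Aᵏz, z⟩² ≤ ⟨A²ᵏz, z⟩ ⟨z, z⟩`, reducing to the case `k`.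
-/

theorem card_mul_le_sum_of_prod_eq_pow {ι : Type*} [Fintype ι] [Nonempty ι] {x : ι → ℝ}
    (hx : ∀ i, 0 ≤ x i) {y : ℝ} (hy : 0 ≤ y) (h : ∏ i, x i = y ^ Fintype.card ι) :
    Fintype.card ι * y ≤ ∑ i, x i := by
  have hN : (0 : ℝ) < Fintype.card ι := by exact_mod_cast Fintype.card_pos
  have amgm := Real.geom_mean_le_arith_mean_weighted univ (fun _ ↦ (Fintype.card ι : ℝ)⁻¹) x
    (fun _ _ ↦ by positivity) (by simp [hN.ne']) (fun i _ ↦ hx i)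
  rw [Real.finsetProd_rpow univ x (fun i _ ↦ hx i), h, ← Real.rpow_natCast,
    ← Real.rpow_mul hy, mul_inv_cancel₀ hN.ne', Real.rpow_one, ← mul_sum] at amgm
  rwa [le_inv_mul_iff₀ hN] at amgm

theorem odd_mul_le_add_sum_add {m : ℕ} {a y : ℝ} {b c : ℕ → ℝ} (ha : 0 ≤ a) (hb : ∀ k, 0 ≤ b k)
    (hc : ∀ k, 0 ≤ c k) (hy : 0 ≤ y) (h : a * ∏ k ∈ range m, (b k * c k) = y ^ (2 * m + 1)) :
    (2 * m + 1) * y ≤ a + ∑ k ∈ range m, (b k + c k) := by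
  let x : Option (Fin m × Bool) → ℝ
    | none => a
    | some (k, true) => b k
    | some (k, false) => c k
  have hx : ∀ i, 0 ≤ x i := by rintro (_ | ⟨k, _ | _⟩) <;> simp [x, *]
  have hcard : Fintype.card (Option (Fin m × Bool)) = 2 * m + 1 := by simp [mul_comm]
  have := card_mul_le_sum_of_prod_eq_pow hx hy (by
    simp [x, hcard, Fintype.prod_prod_type, Fin.prod_univ_eq_prod_range (fun k ↦ b k * c k), ← h])
  simpa [x, hcard, Fintype.sum_prod_type, Fin.sum_univ_eq_sum_range (fun k ↦ b k + c k)] using this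

theorem prod_range_div'_of_ne_zero {G₀ : Type*} [CommGroupWithZero G₀] {f : ℕ → G₀}
    (hf : ∀ k, f k ≠ 0) (m : ℕ) :
    ∏ k ∈ range m, f k / f (k + 1) = f 0 / f m := by
  simpa using congrArg Units.val (prod_range_div' (fun k ↦ Units.mk0 (f k) (hf k)) m)

theorem odd_mul_mul_le_telescoping_sum {m : ℕ} {r : ℝ} (hr : 0 < r) {x y : ℕ → ℝ}
    (hx : ∀ k, 0 < x k) (hy : ∀ k, 0 < y k) :
    (2 * m + 1) * (x 0 * y 0) ≤ x m * y m / r ^ (2 * m) +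
      ∑ k ∈ range m, (r * x 0 ^ 2 * y k / x (k + 1) + r * y 0 ^ 2 * x k / y (k + 1)) := by
  have := hx 0
  have := hy 0
  refine odd_mul_le_add_sum_add (by have := hx m; have := hy m; positivity)
    (fun k ↦ by have := hx (k + 1); have := hy k; positivity)
    (fun k ↦ by have := hx k; have := hy (k + 1); positivity) (by positivity) ?_
  have hpair : ∀ k ∈ range m,
      (r * x 0 ^ 2 * y k / x (k + 1)) * (r * y 0 ^ 2 * x k / y (k + 1)) =
        (r * x 0 * y 0) ^ 2 * ((x k / x (k + 1)) * (y k / y (k + 1))) := fun k _ ↦ by ring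
  rw [prod_congr rfl hpair, prod_mul_distrib, prod_mul_distrib, prod_const, card_range,
    prod_range_div'_of_ne_zero (fun k ↦ (hx k).ne'),
    prod_range_div'_of_ne_zero (fun k ↦ (hy k).ne')]
  have := (hx m).ne'
  have := (hy m).ne'
  field_simp
  ring

theorem le_of_continuous_of_forall_pos {α : Type*} [TopologicalSpace α] [Preorder α]
    [OrderClosedTopology α] {f g : ℝ → α} (hf : Continuous f) (hg : Continuous g)
    (h : ∀ ε > 0, f ε ≤ g ε) : f 0 ≤ g 0 :=
  le_of_tendsto_of_tendsto (hf.tendsto 0 |>.mono_left nhdsWithin_le_nhds)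
    (hg.tendsto 0 |>.mono_left nhdsWithin_le_nhds)
    (eventually_nhdsWithin_of_forall (s := Set.Ioi 0) h)

namespace Matrix

variable {ι : Type*} [Fintype ι]

theorem IsSymm.sum_sum_mul_swap {R : Type*} [CommSemiring R] {A : Matrix ι ι R} (hA : A.IsSymm)
    (f : ι → ι → R) :
    ∑ i, ∑ j, A i j * f j i = ∑ i, ∑ j, A i j * f i j := by
  rw [sum_comm]
  simp_rw [hA.apply]

theorem mulVec_dotProduct_eq_sum_sum {R : Type*} [CommSemiring R] (A : Matrix ι ι R)
    (x y : ι → R) :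
    (A *ᵥ x) ⬝ᵥ y = ∑ i, ∑ j, A i j * (y i * x j) := by
  simp only [dotProduct, mulVec, sum_mul]
  exact sum_congr rfl fun i _ ↦ sum_congr rfl fun j _ ↦ by ring

theorem sum_sum_mul_div_mulVec {K : Type*} [Field K] (A : Matrix ι ι K) {x : ι → K}
    (hx : ∀ i, (A *ᵥ x) i ≠ 0) (c : ι → K) :
    ∑ i, ∑ j, A i j * (c i * x j / (A *ᵥ x) i) = ∑ i, c i := by
  refine sum_congr rfl fun i _ ↦ ?_
  calc ∑ j, A i j * (c i * x j / (A *ᵥ x) i) = c i / (A *ᵥ x) i * (A *ᵥ x) i := by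
        rw [mulVec, dotProduct, mul_sum]
        exact sum_congr rfl fun j _ ↦ by ring
    _ = c i := div_mul_cancel₀ _ (hx i)

variable [DecidableEq ι]

theorem IsSymm.pow_add_mulVec_dotProduct {R : Type*} [CommSemiring R] {A : Matrix ι ι R}
    (hA : A.IsSymm) (a b : ℕ) (z : ι → R) :
    (A ^ (a + b) *ᵥ z) ⬝ᵥ z = (A ^ a *ᵥ z) ⬝ᵥ (A ^ b *ᵥ z) := by
  rw [pow_add, ← mulVec_mulVec, dotProduct_comm, dotProduct_mulVec, ← mulVec_transpose,
    (hA.pow a).eq]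

theorem IsSymm.sq_pow_mulVec_dotProduct_le {A : Matrix ι ι ℝ} (hA : A.IsSymm) (k : ℕ)
    (z : ι → ℝ) : ((A ^ k *ᵥ z) ⬝ᵥ z) ^ 2 ≤ (A ^ (2 * k) *ᵥ z ⬝ᵥ z) * (z ⬝ᵥ z) := by
  rw [two_mul, hA.pow_add_mulVec_dotProduct]
  simpa [dotProduct, sq] using sum_mul_sq_le_sq_mul_sq univ (A ^ k *ᵥ z) z

theorem pow_mulVec_pos {A : Matrix ι ι ℝ} {z : ι → ℝ} (hA : ∀ i j, 0 < A i j)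
    (hz : ∀ i, 0 < z i) (k : ℕ) (i : ι) : 0 < (A ^ k *ᵥ z) i := by
  induction k generalizing i with
  | zero => simpa using hz i
  | succ k ih =>
    rw [pow_succ', ← mulVec_mulVec]
    exact sum_pos (fun j _ ↦ mul_pos (hA i j) (ih j)) ⟨i, mem_univ i⟩

theorem odd_mul_mulVec_dotProduct_le_of_pos {A : Matrix ι ι ℝ} {z : ι → ℝ} (hA : A.IsSymm)
    (hApos : ∀ i j, 0 < A i j) (hz : ∀ i, 0 < z i) (m : ℕ) {r : ℝ} (hr : 0 < r) :
    (2 * m + 1) * ((A *ᵥ z) ⬝ᵥ z) ≤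
      (A ^ (2 * m + 1) *ᵥ z ⬝ᵥ z) / r ^ (2 * m) + 2 * m * (r * (z ⬝ᵥ z)) := by
  set w : ℕ → ι → ℝ := fun k ↦ A ^ k *ᵥ z
  have hw0 : w 0 = z := by simp [w]
  have hw : ∀ k, w (k + 1) = A *ᵥ w k := fun k ↦ by simp [w, pow_succ', mulVec_mulVec]
  have hwpos : ∀ k i, 0 < w k i := pow_mulVec_pos hApos hz
  set b : ℕ → ι → ι → ℝ := fun k i j ↦ r * z i ^ 2 * w k j / w (k + 1) i
  have hrow : ∀ k, ∑ i, ∑ j, A i j * b k i j = r * (z ⬝ᵥ z) := fun k ↦ by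
    have hne : ∀ i, (A *ᵥ w k) i ≠ 0 := fun i ↦ by rw [← hw]; exact (hwpos _ i).ne'
    simp only [b, hw k]
    rw [sum_sum_mul_div_mulVec A hne (fun i ↦ r * z i ^ 2)]
    simp only [dotProduct, mul_sum, sq]
  have hmid : ∑ i, ∑ j, A i j * (w m i * w m j) = A ^ (2 * m + 1) *ᵥ z ⬝ᵥ z := by
    rw [← mulVec_dotProduct_eq_sum_sum, show 2 * m + 1 = (m + 1) + m by ring,
      hA.pow_add_mulVec_dotProduct, pow_succ', ← mulVec_mulVec]
  calc (2 * m + 1) * ((A *ᵥ z) ⬝ᵥ z)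
      = ∑ i, ∑ j, A i j * ((2 * m + 1) * (z i * z j)) := by
        rw [mulVec_dotProduct_eq_sum_sum, mul_sum]
        exact sum_congr rfl fun i _ ↦ by rw [mul_sum]; exact sum_congr rfl fun j _ ↦ by ring
    _ ≤ ∑ i, ∑ j, A i j * (w m i * w m j / r ^ (2 * m) +
          ∑ k ∈ range m, (b k i j + b k j i)) := by
        gcongr with i _ j _
        · exact (hApos i j).le
        · simpa only [hw0] using odd_mul_mul_le_telescoping_sum hr (x := (w · i)) (y := (w · j))
            (hwpos · i) (hwpos · j)
    _ = (∑ i, ∑ j, A i j * (w m i * w m j)) / r ^ (2 * m) +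
          ∑ k ∈ range m, (∑ i, ∑ j, A i j * b k i j + ∑ i, ∑ j, A i j * b k j i) := by
        simp only [mul_add, mul_sum, sum_add_distrib, sum_div, mul_div_assoc]
        simp only [sum_comm (s := range m) (t := (univ : Finset ι))]
    _ = (A ^ (2 * m + 1) *ᵥ z ⬝ᵥ z) / r ^ (2 * m) + 2 * m * (r * (z ⬝ᵥ z)) := by
        rw [hmid, sum_congr rfl fun k _ ↦ by rw [hA.sum_sum_mul_swap (b k), hrow k], sum_const,
          card_range, nsmul_eq_mul]
        ring

theorem pow_mulVec_dotProduct_le_odd_of_pos [Nonempty ι] {A : Matrix ι ι ℝ} {z : ι → ℝ}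
    (hA : A.IsSymm) (hApos : ∀ i j, 0 < A i j) (hz : ∀ i, 0 < z i) (m : ℕ) :
    ((A *ᵥ z) ⬝ᵥ z) ^ (2 * m + 1) ≤ (A ^ (2 * m + 1) *ᵥ z ⬝ᵥ z) * (z ⬝ᵥ z) ^ (2 * m) := by
  have hσ : 0 < z ⬝ᵥ z := sum_pos (fun i _ ↦ mul_pos (hz i) (hz i)) univ_nonempty
  have hs : 0 < (A *ᵥ z) ⬝ᵥ z :=
    sum_pos (fun i _ ↦ mul_pos (by simpa using pow_mulVec_pos hApos hz 1 i) (hz i)) univ_nonempty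
  set s := (A *ᵥ z) ⬝ᵥ z
  set σ := z ⬝ᵥ z
  set τ := A ^ (2 * m + 1) *ᵥ z ⬝ᵥ z
  -- `r = s / σ` avoids the `t`-th root in the optimal `r = (τ / σ) ^ (1 / t)`.
  have := odd_mul_mulVec_dotProduct_le_of_pos hA hApos hz m (div_pos hs hσ)
  rw [div_pow, div_div_eq_mul_div, div_mul_cancel₀ _ hσ.ne'] at this
  have key : s ≤ τ * σ ^ (2 * m) / s ^ (2 * m) := by nlinarith
  rwa [le_div_iff₀ (by positivity), ← pow_succ'] at key

theorem pow_mulVec_dotProduct_le_odd {A : Matrix ι ι ℝ} {z : ι → ℝ} (hA : A.IsSymm)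
    (hAnn : ∀ i j, 0 ≤ A i j) (hz : ∀ i, 0 ≤ z i) (m : ℕ) :
    ((A *ᵥ z) ⬝ᵥ z) ^ (2 * m + 1) ≤ (A ^ (2 * m + 1) *ᵥ z ⬝ᵥ z) * (z ⬝ᵥ z) ^ (2 * m) := by
  cases isEmpty_or_nonempty ι
  · simp [dotProduct]
  let A' : ℝ → Matrix ι ι ℝ := fun ε ↦ A + ε • of fun _ _ ↦ 1
  let z' : ℝ → ι → ℝ := fun ε ↦ z + ε • 1
  have hpos : ∀ ε > 0, ((A' ε *ᵥ z' ε) ⬝ᵥ z' ε) ^ (2 * m + 1) ≤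
      (A' ε ^ (2 * m + 1) *ᵥ z' ε ⬝ᵥ z' ε) * (z' ε ⬝ᵥ z' ε) ^ (2 * m) := fun ε hε ↦
    pow_mulVec_dotProduct_le_odd_of_pos (hA.add ((IsSymm.ext fun _ _ ↦ rfl).smul ε))
      (fun i j ↦ by simpa [A'] using add_pos_of_nonneg_of_pos (hAnn i j) hε)
      (fun i ↦ by simpa [z'] using add_pos_of_nonneg_of_pos (hz i) hε) m
  simpa [A', z'] using le_of_continuous_of_forall_pos (by fun_prop) (by fun_prop) hpos

theorem pow_mulVec_dotProduct_le {A : Matrix ι ι ℝ} {z : ι → ℝ} (hA : A.IsSymm)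
    (hAnn : ∀ i j, 0 ≤ A i j) (hz : ∀ i, 0 ≤ z i) {t : ℕ} (ht : t ≠ 0) :
    ((A *ᵥ z) ⬝ᵥ z) ^ t ≤ (A ^ t *ᵥ z ⬝ᵥ z) * (z ⬝ᵥ z) ^ (t - 1) := by
  induction t using Nat.evenOddRec with
  | h0 => exact absurd rfl ht
  | h_even k ih =>
    have hk : k ≠ 0 := by omega
    have hs : 0 ≤ (A *ᵥ z) ⬝ᵥ z :=
      sum_nonneg fun i _ ↦ mul_nonneg (sum_nonneg fun j _ ↦ mul_nonneg (hAnn i j) (hz j)) (hz i)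
    calc ((A *ᵥ z) ⬝ᵥ z) ^ (2 * k) = (((A *ᵥ z) ⬝ᵥ z) ^ k) ^ 2 := by ring
      _ ≤ ((A ^ k *ᵥ z ⬝ᵥ z) * (z ⬝ᵥ z) ^ (k - 1)) ^ 2 := by gcongr; exact ih hk
      _ = (A ^ k *ᵥ z ⬝ᵥ z) ^ 2 * ((z ⬝ᵥ z) ^ (k - 1)) ^ 2 := by ring
      _ ≤ (A ^ (2 * k) *ᵥ z ⬝ᵥ z) * (z ⬝ᵥ z) * ((z ⬝ᵥ z) ^ (k - 1)) ^ 2 := by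
        gcongr; exact hA.sq_pow_mulVec_dotProduct_le k z
      _ = (A ^ (2 * k) *ᵥ z ⬝ᵥ z) * (z ⬝ᵥ z) ^ (2 * k - 1) := by
        rw [mul_assoc, ← pow_mul, ← pow_succ']
        congr 2
        omega
  | h_odd m _ => simpa using pow_mulVec_dotProduct_le_odd hA hAnn hz m

end Matrix

/-- The Mulholland–Smith / Blakley–Roy Hölder-type inequality: for an entrywise nonnegative
symmetric matrix `A` and an entrywise nonnegative vector `z`,
`⟨Aᵗz, z⟩·⟨z,z⟩^(t-1) ≥ ⟨Az, z⟩ᵗ`; in particular `⟨Aᵗz, z⟩ ≥ ⟨Az, z⟩ᵗ` when `⟨z,z⟩ = 1`. -/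
theorem blakley_roy (n t : ℕ) (ht : 1 ≤ t)
    (A : Matrix (Fin n) (Fin n) ℝ) (z : Fin n → ℝ)
    (hA : A.IsSymm) (hAnn : ∀ i j, 0 ≤ A i j) (hz : ∀ i, 0 ≤ z i) :
    ((A *ᵥ z) ⬝ᵥ z) ^ t ≤ (((A ^ t) *ᵥ z) ⬝ᵥ z) * (z ⬝ᵥ z) ^ (t - 1) ∧
    (z ⬝ᵥ z = 1 → ((A *ᵥ z) ⬝ᵥ z) ^ t ≤ ((A ^ t) *ᵥ z) ⬝ᵥ z) := by
  have h := pow_mulVec_dotProduct_le hA hAnn hz (Nat.one_le_iff_ne_zero.mp ht)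
  exact ⟨h, fun hσ ↦ by simpa [hσ] using h⟩
end

section
/- Let t ≥ 2 be an integer and let G be a finite simple graph on n ≥ 2 vertices with average degree d = 2|E(G)|/n > t. Suppose v is a vertex of G with degree deg(v) < d/4, and let G' = G − v be the graph obtained by deleting v, with n' = n − 1 vertices and average degree d' = 2|E(G')|/(n−1). Then d' ≥ d and (n−1)·d'(d'−1)···(d'−t+1) ≥ n·d(d−1)···(d−t+1). -/
lemma card_edgeSet_induce_add (V : Type) [Fintype V] (G : SimpleGraph V) (v : V) :
    Nat.card (SimpleGraph.induce {w : V | w ≠ v} G).edgeSet + Nat.card (G.neighborSet v)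
      = Nat.card G.edgeSet := by
  classical
  have hinj : Function.Injective (Sym2.map (Subtype.val : {w : V | w ≠ v} → V)) :=
    Sym2.map.injective Subtype.val_injective
  have himg : Sym2.map (Subtype.val : {w : V | w ≠ v} → V) ''
      (SimpleGraph.induce {w : V | w ≠ v} G).edgeSet
      = {e | e ∈ G.edgeSet ∧ v ∉ e} := by
    apply Set.Subset.antisymm
    · rintro e ⟨e', he', rfl⟩
      induction e' using Sym2.ind with
      | _ a b =>
        simp only [Sym2.map_pair_eq, SimpleGraph.mem_edgeSet] at *
        refine ⟨he', ?_⟩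
        simp only [Sym2.mem_iff]
        rintro (h | h)
        · exact a.2 h.symm
        · exact b.2 h.symm
    · rintro e ⟨he, hv⟩
      induction e using Sym2.ind with
      | _ a b =>
        simp only [Sym2.mem_iff, not_or] at hv
        refine ⟨s(⟨a, fun h => hv.1 h.symm⟩, ⟨b, fun h => hv.2 h.symm⟩), ?_, rfl⟩
        simpa using he
  have h1 : Nat.card (SimpleGraph.induce {w : V | w ≠ v} G).edgeSet
      = ({e | e ∈ G.edgeSet ∧ v ∉ e} : Set (Sym2 V)).ncard := by
    rw [Nat.card_coe_set_eq, ← himg, Set.ncard_image_of_injective _ hinj]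
  have h2 : Nat.card (G.neighborSet v) = (G.incidenceSet v).ncard := by
    rw [Nat.card_coe_set_eq]
    exact (Nat.card_congr (G.incidenceSetEquivNeighborSet v)).symm
  have hpart : ({e | e ∈ G.edgeSet ∧ v ∉ e} : Set (Sym2 V)) ∪ G.incidenceSet v = G.edgeSet := by
    ext e
    simp only [Set.mem_union, Set.mem_setOf_eq, SimpleGraph.incidenceSet, Set.mem_setOf_eq]
    constructor
    · rintro (⟨h, _⟩ | ⟨h, _⟩) <;> exact h
    · intro h; by_cases hv : v ∈ e
      · exact Or.inr ⟨h, hv⟩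
      · exact Or.inl ⟨h, hv⟩
  have hdisj : Disjoint ({e | e ∈ G.edgeSet ∧ v ∉ e} : Set (Sym2 V)) (G.incidenceSet v) := by
    rw [Set.disjoint_left]
    rintro e ⟨_, hv⟩ ⟨_, hv'⟩
    exact hv hv'
  rw [h1, h2, Nat.card_coe_set_eq]
  conv_rhs => rw [← hpart]
  rw [Set.ncard_union_eq hdisj (Set.toFinite _) (Set.toFinite _)]

lemma arith_main (t : ℕ) (ht : 2 ≤ t) (n d d' : ℝ) (hn : 2 ≤ n) (hd : (t : ℝ) < d)
    (h1 : (n - 1/2) * d ≤ (n - 1) * d') :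
    d ≤ d' ∧ n * fallFact d t ≤ (n - 1) * fallFact d' t := by
  have hd0 : (0 : ℝ) < d := lt_of_le_of_lt (by positivity) hd
  have hn1 : (0 : ℝ) < n - 1 := by linarith
  have hdd' : d ≤ d' := by
    have : (n - 1) * d ≤ (n - 1) * d' := by nlinarith
    exact le_of_mul_le_mul_left this hn1
  refine ⟨hdd', ?_⟩
  set r : ℝ := d' / d with hr_def
  have hr1 : 1 ≤ r := (one_le_div hd0).mpr hdd'
  have hrn : n - 1/2 ≤ (n - 1) * r := by
    rw [hr_def, ← mul_div_assoc, le_div_iff₀ hd0]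
    linarith
  have hFpos : 0 < fallFact d t := by
    apply Finset.prod_pos
    intro i hi
    have : (i : ℝ) ≤ (t : ℝ) - 1 := by
      have := Finset.mem_range.mp hi
      have : (i : ℝ) + 1 ≤ (t : ℝ) := by exact_mod_cast this
      linarith
    linarith
  have hF' : r ^ t * fallFact d t ≤ fallFact d' t := by
    rw [fallFact, fallFact,
      show r ^ t = ∏ _i ∈ Finset.range t, r by rw [Finset.prod_const, Finset.card_range],
      ← Finset.prod_mul_distrib]
    apply Finset.prod_le_prod
    · intro i hi
      have hi' : (i : ℝ) ≤ (t : ℝ) - 1 := by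
        have := Finset.mem_range.mp hi
        have : (i : ℝ) + 1 ≤ (t : ℝ) := by exact_mod_cast this
        linarith
      have : 0 < d - i := by linarith
      positivity
    · intro i hi
      rw [hr_def, div_mul_eq_mul_div, div_le_iff₀ hd0]
      have hi0 : (0 : ℝ) ≤ i := Nat.cast_nonneg i
      nlinarith
  have hnr : n ≤ (n - 1) * r ^ t := by
    have h2 : r ^ 2 ≤ r ^ t := pow_le_pow_right₀ (by linarith) ht
    have h3 : n ≤ (n - 1) * r ^ 2 := by nlinarith [mul_self_nonneg ((n - 1) * r - (n - 1/2))]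
    nlinarith
  calc n * fallFact d t ≤ ((n - 1) * r ^ t) * fallFact d t :=
        mul_le_mul_of_nonneg_right hnr hFpos.le
    _ = (n - 1) * (r ^ t * fallFact d t) := by ring
    _ ≤ (n - 1) * fallFact d' t := mul_le_mul_of_nonneg_left hF' hn1.le

/-- Deleting a vertex of degree less than `d/4` from a graph of average degree `d > t`
does not decrease the average degree, nor the target quantity `n·d(d-1)⋯(d-t+1)`. -/
theorem delete_low_degree_vertex (t : ℕ) (ht : 2 ≤ t)
    (V : Type) [Fintype V] (G : SimpleGraph V)
    (hn : 2 ≤ Fintype.card V)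
    (hd : (t : ℝ) < avgDeg G)
    (v : V) (hv : (Nat.card (G.neighborSet v) : ℝ) < avgDeg G / 4) :
    avgDeg G ≤
        2 * (Nat.card (SimpleGraph.induce {w : V | w ≠ v} G).edgeSet) /
          ((Fintype.card V : ℝ) - 1) ∧
      (Fintype.card V : ℝ) * fallFact (avgDeg G) t ≤
        ((Fintype.card V : ℝ) - 1) *
          fallFact (2 * (Nat.card (SimpleGraph.induce {w : V | w ≠ v} G).edgeSet) /
            ((Fintype.card V : ℝ) - 1)) t := by
  classical
  set n : ℝ := (Fintype.card V : ℝ) with hn_def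
  have hn2 : (2 : ℝ) ≤ n := by rw [hn_def]; exact_mod_cast hn
  have hn0 : (0 : ℝ) < n := by linarith
  have hn1 : (0 : ℝ) < n - 1 := by linarith
  set E' : ℝ := (Nat.card (SimpleGraph.induce {w : V | w ≠ v} G).edgeSet : ℝ) with hE'_def
  set k : ℝ := (Nat.card (G.neighborSet v) : ℝ) with hk_def
  set d : ℝ := avgDeg G with hd_def
  have hEsplit : E' + k = (Nat.card G.edgeSet : ℝ) := by
    rw [hE'_def, hk_def]
    exact_mod_cast congrArg (Nat.cast : ℕ → ℝ) (card_edgeSet_induce_add V G v)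
  have hdE : d * n = 2 * (Nat.card G.edgeSet : ℝ) := by
    rw [hd_def, avgDeg, ← hn_def]
    field_simp
  set d' : ℝ := 2 * E' / (n - 1) with hd'_def
  have hd'E : (n - 1) * d' = 2 * E' := by
    rw [hd'_def]; field_simp
  have h1 : (n - 1/2) * d ≤ (n - 1) * d' := by
    have hk4 : k < d / 4 := hv
    have : 2 * E' = d * n - 2 * k := by
      rw [← hEsplit] at hdE; linarith
    rw [hd'E, this]; nlinarith
  have := arith_main t ht n d d' hn2 hd h1
  exact ⟨this.1, this.2⟩
end
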